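/- arXiv:2003.14176 — 13 statements merged into one kernel-verified Lean document; each statement's English description precedes it below -/
import Mathlib

section
/- Let (S,≼) be a preordered semiring of polynomial growth and let u ∈ S be a power universal element. Then the spectrum Δ(S,≼) is a locally compact Hausdorff topological space, and the evaluation map ev_u : Δ(S,≼) → ℝ≥0, f ↦ f(u), is proper (the preimage of every compact set is compact). -/
open scoped NNReal
open Filter Topology

variable {S : Type*}

/-- `(S, le)` is a preordered semiring: `le` is reflexive and transitive, `0 ≼ 1`,
and `le` is compatible with addition and multiplication. -/
def IsPreorderedSemiring [CommSemiring S] (le : S → S → Prop) : Prop :=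
  (∀ a, le a a) ∧ (∀ a b c, le a b → le b c → le a c) ∧ le 0 1 ∧
    (∀ a b c : S, le a b → le (a + c) (b + c)) ∧ ∀ a b c : S, le a b → le (a * c) (b * c)

/-- `u` is power universal: `1 ≼ u` and for every `x ≠ 0` there is `k` with
`x ≼ u ^ k` and `1 ≼ u ^ k * x`. -/
def PowerUniversal [CommSemiring S] (le : S → S → Prop) (u : S) : Prop :=
  le 1 u ∧ ∀ x : S, x ≠ 0 → ∃ k : ℕ, le x (u ^ k) ∧ le 1 (u ^ k * x)

/-- `AsympGE le u x y` means `x ≿ y` in the asymptotic preorder associated to `u`: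
there is a sublinear sequence `k` of naturals with `u ^ k n * x ^ n ≽ y ^ n` for all `n`. -/
def AsympGE [CommSemiring S] (le : S → S → Prop) (u : S) (x y : S) : Prop :=
  ∃ k : ℕ → ℕ, Tendsto (fun n => (k n : ℝ) / (n : ℝ)) atTop (𝓝 0) ∧
    ∀ n : ℕ, le (y ^ n) (u ^ k n * x ^ n)

/-- The spectrum `Δ(S, ≼)`: the set of monotone semiring homomorphisms `S → ℝ≥0`. -/
def Spectrum [CommSemiring S] (le : S → S → Prop) : Set (S → ℝ≥0) :=
  {f | f 0 = 0 ∧ f 1 = 1 ∧ (∀ a b, f (a + b) = f a + f b) ∧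
    (∀ a b, f (a * b) = f a * f b) ∧ ∀ a b, le a b → f a ≤ f b}

lemma isClosed_spectrum [CommSemiring S] (le : S → S → Prop) :
    IsClosed (Spectrum le) := by
  have h : Spectrum le =
      ({f : S → ℝ≥0 | f 0 = 0} ∩ {f | f 1 = 1} ∩
      (⋂ (a) (b), {f : S → ℝ≥0 | f (a + b) = f a + f b}) ∩
      (⋂ (a) (b), {f : S → ℝ≥0 | f (a * b) = f a * f b}) ∩
      (⋂ (a) (b) (_ : le a b), {f : S → ℝ≥0 | f a ≤ f b})) := by
    ext f
    simp only [Spectrum, Set.mem_setOf_eq, Set.mem_inter_iff, Set.mem_iInter]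
    tauto
  rw [h]
  refine ((((isClosed_eq (continuous_apply 0) continuous_const).inter
    (isClosed_eq (continuous_apply 1) continuous_const)).inter ?_).inter ?_).inter ?_
  · exact isClosed_iInter fun a => isClosed_iInter fun b =>
      isClosed_eq (continuous_apply _) ((continuous_apply a).add (continuous_apply b))
  · exact isClosed_iInter fun a => isClosed_iInter fun b =>
      isClosed_eq (continuous_apply _) ((continuous_apply a).mul (continuous_apply b))
  · exact isClosed_iInter fun a => isClosed_iInter fun b => isClosed_iInter fun _ =>
      isClosed_le (continuous_apply a) (continuous_apply b)

lemma spectrum_map_pow [CommSemiring S] {le : S → S → Prop} {f : S → ℝ≥0}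
    (hf : f ∈ Spectrum le) (x : S) : ∀ n : ℕ, f (x ^ n) = f x ^ n := by
  intro n
  induction n with
  | zero => simpa using hf.2.1
  | succ n ih => rw [pow_succ, hf.2.2.2.1, ih, pow_succ]

lemma isCompact_bounded_spectrum [CommSemiring S] (le : S → S → Prop)
    (u : S) (hu : PowerUniversal le u) (M : ℝ≥0) :
    IsCompact (Spectrum le ∩ {f | f u ≤ M}) := by
  choose k hk _ using hu.2
  classical
  let k' : S → ℕ := fun x => if h : x = 0 then 0 else k x h
  refine IsCompact.of_isClosed_subset
    (isCompact_univ_pi (fun x : S => isCompact_Icc (a := (0 : ℝ≥0)) (b := M ^ k' x)))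
    ((isClosed_spectrum le).inter (isClosed_le (continuous_apply u) continuous_const)) ?_
  rintro f ⟨hf, hfu⟩
  rw [Set.mem_univ_pi]
  intro x
  refine ⟨zero_le, ?_⟩
  by_cases hx : x = 0
  · subst hx; rw [hf.1]; exact zero_le
  show f x ≤ M ^ (if h : x = 0 then 0 else k x h)
  rw [dif_neg hx]
  calc f x ≤ f (u ^ k x hx) := hf.2.2.2.2 _ _ (hk x hx)
    _ = f u ^ k x hx := spectrum_map_pow hf u _
    _ ≤ M ^ k x hx := pow_le_pow_left₀ zero_le hfu _

/-- If `(S, ≼)` is a preordered semiring of polynomial growth with power universal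
element `u`, then the spectrum is a locally compact Hausdorff space and the
evaluation map at `u` is proper (preimages of compact sets are compact). -/
theorem spectrum_locallyCompact_evaluation_proper [CommSemiring S] (le : S → S → Prop)
    (hpre : IsPreorderedSemiring le)
    (u : S) (hu : PowerUniversal le u) :
    LocallyCompactSpace ↥(Spectrum le) ∧ T2Space ↥(Spectrum le) ∧
      ∀ K : Set ℝ≥0, IsCompact K →
        IsCompact ((fun f : ↥(Spectrum le) => f.1 u) ⁻¹' K) := by
  have hemb : IsEmbedding ((↑) : ↥(Spectrum le) → (S → ℝ≥0)) := IsEmbedding.subtypeVal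
  -- a general compactness statement for closed conditions inside a bounded set
  have key : ∀ A : Set (S → ℝ≥0), IsClosed A → (∃ M : ℝ≥0, ∀ f ∈ A, f u ≤ M) →
      IsCompact (Subtype.val ⁻¹' A : Set ↥(Spectrum le)) := by
    rintro A hA ⟨M, hM⟩
    rw [hemb.isCompact_iff]
    have himg : Subtype.val '' (Subtype.val ⁻¹' A : Set ↥(Spectrum le))
        = Spectrum le ∩ A := Subtype.image_preimage_coe _ _
    rw [himg]
    refine IsCompact.of_isClosed_subset (isCompact_bounded_spectrum le u hu M)
      ((isClosed_spectrum le).inter hA) ?_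
    rintro f ⟨hf, hfA⟩
    exact ⟨hf, hM f hfA⟩
  have ht2 : T2Space ↥(Spectrum le) := inferInstance
  have hwlc : WeaklyLocallyCompactSpace ↥(Spectrum le) := by
    refine ⟨fun f => ?_⟩
    refine ⟨Subtype.val ⁻¹' {g | g u ≤ f.1 u + 1}, ?_, ?_⟩
    · exact key _ (isClosed_le (continuous_apply u) continuous_const) ⟨f.1 u + 1, fun g hg => hg⟩
    · refine Filter.mem_of_superset ?_
        (Set.preimage_mono (fun g (hg : g u < f.1 u + 1) => le_of_lt hg))
      refine IsOpen.mem_nhds ?_ ?_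
      · exact (isOpen_lt (continuous_apply u) continuous_const).preimage continuous_subtype_val
      · exact (lt_add_of_pos_right (f.1 u) one_pos : f.1 u < f.1 u + 1)
  refine ⟨inferInstance, ht2, fun K hK => ?_⟩
  obtain ⟨M, hM⟩ := hK.bddAbove
  have : ((fun f : ↥(Spectrum le) => f.1 u) ⁻¹' K)
      = Subtype.val ⁻¹' ((fun g : S → ℝ≥0 => g u) ⁻¹' K) := rfl
  rw [this]
  exact key _ (hK.isClosed.preimage (continuous_apply u)) ⟨M, fun g hg => hM hg⟩
end

section
/- Let (S,≼) be a preordered semiring of polynomial growth and let (X,Φ) be an abstract asymptotic spectrum for (S,≼), i.e., X is a locally compact Hausdorff topological space, Φ : S → C(X, ℝ≥0) is a semiring homomorphism into the semiring of continuous ℝ≥0-valued functions on X such that the image Φ(S) separates the points of X, Φ(u) : X → ℝ≥0 is a proper map for every power universal element u ∈ S, and for all x, y ∈ S: x ≿ y (in the asymptotic preorder) if and only if Φ(x)(p) ≥ Φ(y)(p) for all p ∈ X. Then there exists a unique homeomorphism h : X → Δ(S,≼) such that Φ(s) = ev_s ∘ h for all s ∈ S, where ev_s : Δ(S,≼) →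 ℝ≥0 is the evaluation map f ↦ f(s). -/
open scoped NNReal
open Filter Topology

variable {S : Type*}

section Aux
variable [CommSemiring S] {le : S → S → Prop}

theorem aux_pow_le (hpre : IsPreorderedSemiring le) {a b : S} (h : le a b) :
    ∀ n : ℕ, le (a ^ n) (b ^ n) := by
  obtain ⟨hrefl, htrans, -, -, hmul⟩ := hpre
  intro n
  induction n with
  | zero => simpa using hrefl 1
  | succ n ih =>
    rw [pow_succ, pow_succ]
    exact htrans _ (b ^ n * a) _ (hmul _ _ _ ih) (by rw [mul_comm (b^n) a, mul_comm (b^n) b]; exact hmul _ _ _ h)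

theorem aux_le_asympGE (hpre : IsPreorderedSemiring le) (u : S) {x y : S} (h : le y x) :
    AsympGE le u x y := by
  refine ⟨fun _ => 0, by simpa using tendsto_const_nhds, fun n => ?_⟩
  rw [pow_zero, one_mul]
  exact aux_pow_le hpre h n

theorem aux_g_pow {g : S → ℝ≥0} (hg : g ∈ Spectrum le) (a : S) :
    ∀ n : ℕ, g (a ^ n) = g a ^ n := by
  intro n
  induction n with
  | zero => simpa using hg.2.1
  | succ n ih => rw [pow_succ, hg.2.2.2.1, ih, pow_succ]

theorem aux_g_nsmul {g : S → ℝ≥0} (hg : g ∈ Spectrum le) (a : S) :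
    ∀ n : ℕ, g (n • a) = n * g a := by
  intro n
  induction n with
  | zero => simpa using hg.1
  | succ n ih => rw [succ_nsmul, hg.2.2.1, ih]; push_cast; ring

theorem aux_g_sum {g : S → ℝ≥0} (hg : g ∈ Spectrum le) {ι : Type*} (t : Finset ι) (v : ι → S) :
    g (∑ i ∈ t, v i) = ∑ i ∈ t, g (v i) := by
  classical
  induction t using Finset.induction_on with
  | empty => simpa using hg.1
  | @insert a t ha ih => rw [Finset.sum_insert ha, hg.2.2.1, Finset.sum_insert ha, ih]

/-- easy direction: asymptotic inequality implies inequality under every monotone hom -/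
theorem aux_spec_asymp (hpre : IsPreorderedSemiring le) {u : S} (h1u : le 1 u)
    {g : S → ℝ≥0} (hg : g ∈ Spectrum le) {x y : S} (h : AsympGE le u x y) : g y ≤ g x := by
  obtain ⟨k, hk, hle⟩ := h
  have hgu : (1 : ℝ≥0) ≤ g u := hg.2.1 ▸ hg.2.2.2.2 _ _ h1u
  by_contra hlt
  push_neg at hlt
  -- g x < g y
  have key : ∀ n, g y ^ n ≤ g u ^ k n * g x ^ n := fun n => by
    have := hg.2.2.2.2 _ _ (hle n)
    rwa [hg.2.2.2.1, aux_g_pow hg, aux_g_pow hg, aux_g_pow hg] at this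
  set A : ℝ := (g y : ℝ) / (g x : ℝ) with hA
  have hgy : (0:ℝ) < g y := lt_of_le_of_lt (g x).2 hlt
  have hgx : (0:ℝ) ≤ g x := (g x).2
  rcases eq_or_lt_of_le hgx with hx0 | hx0
  · have := key 1
    rw [pow_one, pow_one] at this
    have : (g y : ℝ) ≤ g u ^ k 1 * g x := by exact_mod_cast this
    rw [← hx0, mul_zero] at this
    linarith
  · have hA1 : 1 < A := (one_lt_div hx0).2 (by exact_mod_cast hlt)
    have hlog : ∀ n : ℕ, 1 ≤ n → Real.log A ≤ (k n / n) * Real.log (g u) := by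
      intro n hn
      have hn' : (0:ℝ) < n := by exact_mod_cast hn
      have h2 : A ^ n ≤ (g u : ℝ) ^ k n := by
        have := key n
        have h3 : (g y : ℝ) ^ n ≤ (g u : ℝ) ^ k n * (g x : ℝ) ^ n := by exact_mod_cast this
        rw [hA, div_pow, div_le_iff₀ (by positivity)]
        linarith
      have h4 : Real.log (A ^ n) ≤ Real.log ((g u : ℝ) ^ k n) :=
        Real.log_le_log (by positivity) h2
      rw [Real.log_pow, Real.log_pow] at h4
      rw [div_mul_eq_mul_div, le_div_iff₀ hn']
      calc Real.log A * n = n * Real.log A := by ring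
        _ ≤ k n * Real.log (g u) := h4
    have htend : Tendsto (fun n : ℕ => (k n / n : ℝ) * Real.log (g u)) atTop (𝓝 0) := by
      simpa using hk.mul_const (Real.log (g u))
    have : Real.log A ≤ 0 :=
      ge_of_tendsto htend (eventually_atTop.2 ⟨1, fun n hn => hlog n hn⟩)
    have : (0:ℝ) < Real.log A := Real.log_pos hA1
    linarith

theorem aux_sep {T : Set (S → ℝ≥0)} (hT : IsCompact T) (hTspec : T ⊆ Spectrum le)
    {f : S → ℝ≥0} (hf : f ∈ Spectrum le) (hfT : f ∉ T) :
    ∃ (x₀ y₀ : S) (m : ℕ), 0 < m ∧ (∀ g ∈ T, g y₀ ≤ g x₀ + (m : ℝ≥0)) ∧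
      f x₀ + (m : ℝ≥0) < f y₀ := by
  classical
  set T' : Set (S → ℝ≥0) := insert f T with hT'def
  have hT' : IsCompact T' := hT.insert f
  haveI : CompactSpace ↥T' := isCompact_iff_compactSpace.mp hT'
  have hmem : ∀ t : ↥T', (t : S → ℝ≥0) ∈ Spectrum le := by
    rintro ⟨t, ht | ht⟩
    · exact ht ▸ hf
    · exact hTspec ht
  set evS : S → C(↥T', ℝ) := fun s =>
    ⟨fun t => ((t : S → ℝ≥0) s : ℝ),
      NNReal.continuous_coe.comp ((continuous_apply s).comp continuous_subtype_val)⟩ with hevS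
  set M : Submodule ℝ C(↥T', ℝ) := Submodule.span ℝ (Set.range evS) with hM
  have hone : (1 : C(↥T', ℝ)) ∈ M := by
    have : evS 1 = 1 := by
      ext t; simp [hevS, (hmem t).2.1]
    exact this ▸ Submodule.subset_span ⟨1, rfl⟩
  have hmulle : M * M ≤ M := by
    rw [hM, Submodule.span_mul_span]
    refine Submodule.span_le.2 ?_
    rintro _ ⟨_, ⟨s1, rfl⟩, _, ⟨s2, rfl⟩, rfl⟩
    refine Submodule.subset_span ⟨s1 * s2, ?_⟩
    ext t
    simp [hevS, (hmem t).2.2.2.1]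
  have hmulmem : ∀ x y : C(↥T', ℝ), x ∈ M → y ∈ M → x * y ∈ M := fun x y hx hy =>
    hmulle (Submodule.mul_mem_mul hx hy)
  set A : Subalgebra ℝ C(↥T', ℝ) := M.toSubalgebra hone hmulmem with hA
  have hsepA : A.SeparatesPoints := by
    rintro t1 t2 hne
    have h1 : (t1 : S → ℝ≥0) ≠ (t2 : S → ℝ≥0) := fun h => hne (Subtype.ext h)
    obtain ⟨s, hs⟩ := Function.ne_iff.1 h1
    exact ⟨evS s, ⟨evS s, Submodule.subset_span ⟨s, rfl⟩, rfl⟩, by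
      simpa [hevS, NNReal.coe_inj] using hs⟩
  -- Urysohn
  have hsclosed : IsClosed (Subtype.val ⁻¹' T : Set ↥T') :=
    (hT.isClosed).preimage continuous_subtype_val
  have htclosed : IsClosed (Subtype.val ⁻¹' {f} : Set ↥T') :=
    isClosed_singleton.preimage continuous_subtype_val
  have hdisj : Disjoint (Subtype.val ⁻¹' T : Set ↥T') (Subtype.val ⁻¹' {f}) := by
    rw [Set.disjoint_left]
    rintro ⟨t, ht⟩ h1 h2
    simp only [Set.mem_preimage, Set.mem_singleton_iff] at h1 h2
    exact hfT (h2 ▸ h1)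
  obtain ⟨G, hG0, hG1, -⟩ := exists_continuous_zero_one_of_isClosed hsclosed htclosed hdisj
  obtain ⟨⟨a, haM⟩, hanear⟩ :=
    ContinuousMap.exists_mem_subalgebra_near_continuousMap_of_separatesPoints A hsepA G
      (1/4) (by norm_num)
  rw [hA, Submodule.mem_toSubalgebra, hM, Submodule.mem_span_set] at haM
  obtain ⟨c, hsupp, hsum⟩ := haM
  set t := c.support with ht
  set σ : C(↥T', ℝ) → S := fun i =>
    if h : ∃ s : S, evS s = i then Classical.choose h else 1 with hσdef
  have hσ : ∀ i ∈ t, evS (σ i) = i := by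
    intro i hi
    obtain ⟨s, hs⟩ := hsupp hi
    simp only [hσdef]
    rw [dif_pos ⟨s, hs⟩]
    exact Classical.choose_spec (⟨s, hs⟩ : ∃ s, evS s = i)
  set B : ℝ := ∑ i ∈ t, ‖i‖ with hB
  obtain ⟨d, hdpos, hBd⟩ : ∃ d : ℕ, 0 < d ∧ B ≤ d :=
    ⟨⌈B⌉₊ + 1, Nat.succ_pos _,
      le_trans (Nat.le_ceil B) (by exact_mod_cast Nat.le_succ _)⟩
  have hdposR : (0:ℝ) < d := by exact_mod_cast hdpos
  set n : C(↥T', ℝ) → ℤ := fun i => round (6 * (d:ℝ) * c i) with hn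
  -- the key pointwise estimate
  have key : ∀ yt : ↥T', |∑ i ∈ t, (n i : ℝ) * i yt - 6 * d * G yt| ≤ 2 * d := by
    intro yt
    have ha_yt : |a yt - G yt| ≤ 1/4 := by
      have h1 : ‖(a - G) yt‖ ≤ ‖a - G‖ := ContinuousMap.norm_coe_le_norm _ _
      rw [ContinuousMap.sub_apply, Real.norm_eq_abs] at h1
      linarith [hanear.le]
    have hsum_yt : ∑ i ∈ t, c i * i yt = a yt := by
      have := congrArg (fun (q : C(↥T', ℝ)) => q yt) hsum
      simpa [Finsupp.sum, ht] using this
    have hterm : ∀ i ∈ t, |(n i : ℝ) * i yt - 6 * d * (c i * i yt)| ≤ (1/2) * ‖i‖ := by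
      intro i hi
      have h1 : |(n i : ℝ) - 6 * d * c i| ≤ 1/2 := by
        rw [hn, abs_sub_comm]
        simpa using abs_sub_round (6 * (d:ℝ) * c i)
      have h2 : |i yt| ≤ ‖i‖ := by
        rw [← Real.norm_eq_abs]; exact ContinuousMap.norm_coe_le_norm _ _
      calc |(n i : ℝ) * i yt - 6 * d * (c i * i yt)|
          = |(n i : ℝ) - 6 * d * c i| * |i yt| := by rw [← abs_mul]; ring_nf
        _ ≤ (1/2) * ‖i‖ := by
            apply mul_le_mul h1 h2 (abs_nonneg _) (by norm_num)
    have hsum2 : |∑ i ∈ t, ((n i : ℝ) * i yt - 6 * d * (c i * i yt))| ≤ (1/2) * B := by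
      refine le_trans (Finset.abs_sum_le_sum_abs _ _) ?_
      rw [hB, Finset.mul_sum]
      exact Finset.sum_le_sum hterm
    have hexp : ∑ i ∈ t, ((n i : ℝ) * i yt - 6 * d * (c i * i yt))
        = ∑ i ∈ t, (n i : ℝ) * i yt - 6 * d * a yt := by
      rw [← hsum_yt, Finset.sum_sub_distrib, Finset.mul_sum]
    calc |∑ i ∈ t, (n i : ℝ) * i yt - 6 * d * G yt|
        = |(∑ i ∈ t, (n i : ℝ) * i yt - 6 * d * a yt) + 6 * d * (a yt - G yt)| := by
          congr 1; ring
      _ ≤ |∑ i ∈ t, (n i : ℝ) * i yt - 6 * d * a yt| + |6 * d * (a yt - G yt)| :=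
          abs_add_le _ _
      _ ≤ (1/2) * B + 6 * d * (1/4) := by
          refine add_le_add (hexp ▸ hsum2) ?_
          rw [abs_mul]
          refine mul_le_mul (by rw [abs_of_nonneg]; positivity) ha_yt (abs_nonneg _)
            (by positivity)
      _ ≤ 2 * d := by nlinarith [hBd]
  -- define x₀, y₀
  -- express differences
  have happly : ∀ (i : C(↥T', ℝ)), i ∈ t → ∀ yt : ↥T',
      i yt = (((yt : S → ℝ≥0) (σ i)) : ℝ) := by
    intro i hi yt
    have := congrArg (fun q : C(↥T', ℝ) => q yt) (hσ i hi)
    simpa [hevS] using this.symm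
  have hdiff : ∀ yt : ↥T',
      (((yt : S → ℝ≥0) (∑ i ∈ t, ((n i).toNat) • σ i) : ℝ)
        - ((yt : S → ℝ≥0) (∑ i ∈ t, ((-(n i)).toNat) • σ i) : ℝ))
      = ∑ i ∈ t, (n i : ℝ) * i yt := by
    intro yt
    have hg := hmem yt
    rw [aux_g_sum hg, aux_g_sum hg]
    push_cast
    rw [← Finset.sum_sub_distrib]
    refine Finset.sum_congr rfl fun i hi => ?_
    rw [aux_g_nsmul hg, aux_g_nsmul hg, happly i hi yt]
    push_cast
    have hz : (((n i).toNat : ℝ) - ((-(n i)).toNat : ℝ)) = (n i : ℝ) := by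
      exact_mod_cast congrArg (Int.cast : ℤ → ℝ) (Int.toNat_sub_toNat_neg (n i))
    rw [← hz]; ring
  refine ⟨∑ i ∈ t, ((-(n i)).toNat) • σ i, ∑ i ∈ t, ((n i).toNat) • σ i, 3 * d,
    by positivity, ?_, ?_⟩
  · intro g hgT
    set yt : ↥T' := ⟨g, Set.mem_insert_of_mem f hgT⟩ with hyt
    have hG : G yt = 0 := hG0 (by simp [hyt, hgT])
    have hk := key yt
    rw [hG] at hk
    have hd2 : ((g (∑ i ∈ t, ((n i).toNat) • σ i) : ℝ))
        - ((g (∑ i ∈ t, ((-(n i)).toNat) • σ i) : ℝ)) = ∑ i ∈ t, (n i : ℝ) * i yt := hdiff yt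
    rw [← NNReal.coe_le_coe]
    push_cast
    have habs := abs_le.1 hk
    linarith [habs.2, hdposR]
  · set yt : ↥T' := ⟨f, Set.mem_insert f T⟩ with hyt
    have hG : G yt = 1 := hG1 (by simp [hyt])
    have hk := key yt
    rw [hG] at hk
    have hd2 : ((f (∑ i ∈ t, ((n i).toNat) • σ i) : ℝ))
        - ((f (∑ i ∈ t, ((-(n i)).toNat) • σ i) : ℝ)) = ∑ i ∈ t, (n i : ℝ) * i yt := hdiff yt
    rw [← NNReal.coe_lt_coe]
    push_cast
    have habs := abs_le.1 hk
    linarith [habs.1, hdposR]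

end Aux

/-- Uniqueness of the asymptotic spectrum: if `(X, Φ)` is an abstract asymptotic
spectrum for `(S, ≼)`, then there is a unique homeomorphism `h : X → Δ(S, ≼)`
with `Φ s = ev_s ∘ h` for all `s`. -/
theorem abstract_asymptotic_spectrum_unique [CommSemiring S] (le : S → S → Prop)
    (hpre : IsPreorderedSemiring le)
    (u : S) (hu : PowerUniversal le u)
    (X : Type*) [TopologicalSpace X] [T2Space X] [LocallyCompactSpace X]
    (Φ : S →+* C(X, ℝ≥0))
    (hsep : ∀ p q : X, p ≠ q → ∃ s : S, Φ s p ≠ Φ s q)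
    (hproper : ∀ v : S, PowerUniversal le v →
      ∀ K : Set ℝ≥0, IsCompact K → IsCompact (Φ v ⁻¹' K))
    (hchar : ∀ x y : S, AsympGE le u x y ↔ ∀ p : X, Φ y p ≤ Φ x p) :
    ∃! h : X ≃ₜ ↥(Spectrum le), ∀ (s : S) (p : X), Φ s p = ((h p : S → ℝ≥0)) s := by
  classical
  set h₀ : X → (S → ℝ≥0) := fun p s => Φ s p with hh₀
  have hmem : ∀ p, h₀ p ∈ Spectrum le := by
    intro p
    refine ⟨?_, ?_, ?_, ?_, ?_⟩
    · show Φ 0 p = 0; rw [map_zero]; rfl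
    · show Φ 1 p = 1; rw [map_one]; rfl
    · intro a b; show Φ (a + b) p = _; rw [map_add]; rfl
    · intro a b; show Φ (a * b) p = _; rw [map_mul]; rfl
    · intro a b hab
      exact (hchar b a).1 (aux_le_asympGE hpre u hab) p
  have hcont : Continuous h₀ := continuous_pi fun s => (Φ s).continuous
  -- surjectivity
  have hsurj : ∀ f ∈ Spectrum le, ∃ p, h₀ p = f := by
    intro f hf
    by_contra hno
    push_neg at hno
    obtain ⟨a, ha⟩ := exists_nat_gt (f u)
    set K := {p : X | Φ u p ≤ (a : ℝ≥0)} with hK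
    have hKeq : K = Φ u ⁻¹' (Set.Icc 0 (a : ℝ≥0)) := by
      ext p; simp [hK, Set.mem_Icc]
    have hKcomp : IsCompact K := by
      rw [hKeq]; exact hproper u hu _ isCompact_Icc
    have hTcomp : IsCompact (h₀ '' K) := hKcomp.image hcont
    have hTspec : h₀ '' K ⊆ Spectrum le := by rintro _ ⟨p, -, rfl⟩; exact hmem p
    have hfT : f ∉ h₀ '' K := by rintro ⟨p, -, hp⟩; exact hno p hp
    obtain ⟨x₀, y₀, m, hm, hKineq, hfineq⟩ := aux_sep hTcomp hTspec hf hfT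
    obtain ⟨k, hy0uk⟩ : ∃ k : ℕ, le y₀ (u ^ k) := by
      by_cases h0 : y₀ = 0
      · exact ⟨0, by rw [h0, pow_zero]; exact hpre.2.2.1⟩
      · obtain ⟨k, hk, -⟩ := hu.2 y₀ h0
        exact ⟨k, hk⟩
    have hfu1 : (1 : ℝ≥0) ≤ f u := hf.2.1 ▸ hf.2.2.2.2 _ _ hu.1
    set F : ℝ := (f u : ℝ) with hF
    set A : ℝ := (a : ℝ) with hA
    have hFA : F < A := by exact_mod_cast ha
    have hF0 : (0 : ℝ) ≤ F := (f u).2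
    have hA0 : (0 : ℝ) < A := lt_of_le_of_lt hF0 hFA
    set ε : ℝ := (f y₀ : ℝ) - ((f x₀ : ℝ) + m) with hε
    have hεpos : (0 : ℝ) < ε := by
      have := hfineq
      rw [← NNReal.coe_lt_coe] at this
      push_cast at this
      simp only [hε]
      linarith
    have htend : Tendsto (fun r : ℕ => (F / A) ^ r * F ^ k) atTop (𝓝 0) := by
      have h1 : Tendsto (fun r : ℕ => (F / A) ^ r) atTop (𝓝 0) :=
        tendsto_pow_atTop_nhds_zero_of_lt_one (by positivity) ((div_lt_one hA0).2 hFA)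
      simpa using h1.mul_const (F ^ k)
    obtain ⟨r, hr⟩ := (htend.eventually_lt_const hεpos).exists
    set x : S := (a ^ r) • (x₀ + m • (1 : S)) + u ^ (r + k) with hx
    set y : S := (a ^ r) • y₀ with hy
    -- pointwise inequality on X
    have hxy : ∀ p : X, Φ y p ≤ Φ x p := by
      intro p
      have hg := hmem p
      show h₀ p y ≤ h₀ p x
      have hgy : h₀ p y = (a : ℝ≥0) ^ r * h₀ p y₀ := by
        rw [hy, aux_g_nsmul hg]; push_cast; ring
      have hgx : h₀ p x = (a : ℝ≥0) ^ r * (h₀ p x₀ + m) + (h₀ p u) ^ (r + k) := by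
        rw [hx, hg.2.2.1, aux_g_nsmul hg, hg.2.2.1, aux_g_nsmul hg, hg.2.1, aux_g_pow hg]
        push_cast; ring
      rw [hgy, hgx]
      by_cases hp : Φ u p ≤ (a : ℝ≥0)
      · have h1 : h₀ p y₀ ≤ h₀ p x₀ + m := hKineq (h₀ p) ⟨p, hp, rfl⟩
        calc (a : ℝ≥0) ^ r * h₀ p y₀ ≤ (a : ℝ≥0) ^ r * (h₀ p x₀ + m) :=
              mul_le_mul_right h1 _
          _ ≤ _ := le_self_add
      · push_neg at hp
        have h1 : h₀ p y₀ ≤ (h₀ p u) ^ k := by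
          have := hg.2.2.2.2 _ _ hy0uk
          rwa [aux_g_pow hg] at this
        have h2 : (a : ℝ≥0) ^ r ≤ (h₀ p u) ^ r :=
          pow_le_pow_left₀ zero_le hp.le r
        calc (a : ℝ≥0) ^ r * h₀ p y₀ ≤ (h₀ p u) ^ r * (h₀ p u) ^ k :=
              mul_le_mul' h2 h1
          _ = (h₀ p u) ^ (r + k) := by rw [pow_add]
          _ ≤ _ := le_add_self
    have hfyx : f y ≤ f x := aux_spec_asymp hpre hu.1 hf ((hchar x y).2 hxy)
    -- but f x < f y
    have hfy : (f y : ℝ) = A ^ r * (f y₀ : ℝ) := by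
      rw [hy, aux_g_nsmul hf]; push_cast; ring
    have hfx : (f x : ℝ) = A ^ r * ((f x₀ : ℝ) + m) + F ^ (r + k) := by
      rw [hx, hf.2.2.1, aux_g_nsmul hf, hf.2.2.1, aux_g_nsmul hf, hf.2.1, aux_g_pow hf]
      push_cast; ring
    have hcontr : (f x : ℝ) < (f y : ℝ) := by
      have hFrk : F ^ (r + k) < A ^ r * ε := by
        have h1 : (F / A) ^ r * F ^ k < ε := hr
        rw [div_pow, div_mul_eq_mul_div, div_lt_iff₀ (by positivity)] at h1
        rw [pow_add]
        nlinarith [h1]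
      rw [hfy, hfx]
      have : A ^ r * ((f x₀ : ℝ) + m) + A ^ r * ε = A ^ r * (f y₀ : ℝ) := by
        rw [hε]; ring
      linarith
    rw [← NNReal.coe_le_coe] at hfyx
    linarith
  -- the map into the spectrum
  set e : X → ↥(Spectrum le) := fun p => ⟨h₀ p, hmem p⟩ with he
  have he_cont : Continuous e := hcont.subtype_mk _
  have he_inj : Function.Injective e := by
    intro p q h
    by_contra hne
    obtain ⟨s, hs⟩ := hsep p q hne
    exact hs (congrFun (congrArg Subtype.val h) s)
  have he_surj : Function.Surjective e := by
    rintro ⟨f, hf⟩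
    obtain ⟨p, hp⟩ := hsurj f hf
    exact ⟨p, Subtype.ext hp⟩
  have hbij : Function.Bijective e := ⟨he_inj, he_surj⟩
  have hclosed : IsClosedMap e := by
    intro F hF
    refine isClosed_of_closure_subset ?_
    intro g hg
    set c : ℝ≥0 := (g : S → ℝ≥0) u + 1 with hc
    have hUopen : IsOpen {t : ↥(Spectrum le) | (t : S → ℝ≥0) u < c} :=
      isOpen_lt ((continuous_apply u).comp continuous_subtype_val) continuous_const
    have hgU : g ∈ {t : ↥(Spectrum le) | (t : S → ℝ≥0) u < c} := by
      show (g : S → ℝ≥0) u < (g : S → ℝ≥0) u + 1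
      exact lt_add_of_pos_right _ one_pos
    set Kc : Set X := Φ u ⁻¹' Set.Icc 0 c with hKc
    have hKccomp : IsCompact Kc := hproper u hu _ isCompact_Icc
    have h1 : g ∈ closure (e '' (F ∩ Kc)) := by
      rw [mem_closure_iff] at hg ⊢
      intro O hO hgO
      obtain ⟨z, ⟨hzO, hzU⟩, hzF⟩ :=
        hg (O ∩ {t : ↥(Spectrum le) | (t : S → ℝ≥0) u < c})
          (hO.inter hUopen) ⟨hgO, hgU⟩
      obtain ⟨p, hpF, rfl⟩ := hzF
      refine ⟨e p, hzO, p, ⟨hpF, ?_⟩, rfl⟩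
      exact Set.mem_Icc.2 ⟨zero_le, le_of_lt hzU⟩
    have h2 : IsCompact (e '' (F ∩ Kc)) := (hKccomp.inter_left hF).image he_cont
    have h3 : closure (e '' (F ∩ Kc)) = e '' (F ∩ Kc) := h2.isClosed.closure_eq
    rw [h3] at h1
    exact Set.image_mono Set.inter_subset_left h1
  have hopen : IsOpenMap e := by
    intro U hU
    have h1 := hclosed _ hU.isClosed_compl
    rw [Set.image_compl_eq hbij] at h1
    simpa using h1.isOpen_compl
  refine ⟨Equiv.toHomeomorphOfContinuousOpen (Equiv.ofBijective e hbij) he_cont hopen,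
    fun s p => rfl, ?_⟩
  intro h' hh'
  apply Homeomorph.ext
  intro p
  apply Subtype.ext
  funext s
  rw [← hh' s p]
  rfl
end

section
/- Let (S,≼) be a preordered semiring and let u₁ and u₂ both be power universal elements of S. Then the asymptotic preorders defined with respect to u₁ and u₂ coincide: for all x, y ∈ S, there is a sequence (k_n) of naturals with k_n/n → 0 and u₁^{k_n}·x^n ≽ y^n for all n, if and only if there is a sequence (l_n) of naturals with l_n/n → 0 and u₂^{l_n}·x^n ≽ y^n for all n. -/
open scoped NNReal
open Filter Topology

variable {S : Type*}

lemma pow_le_pow_aux [CommSemiring S] (le : S → S → Prop)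
    (hpre : IsPreorderedSemiring le) {a b : S} (h : le a b) :
    ∀ k : ℕ, le (a ^ k) (b ^ k) := by
  obtain ⟨hrefl, htrans, -, -, hmul⟩ := hpre
  intro k
  induction k with
  | zero => simpa using hrefl 1
  | succ n ih =>
    rw [pow_succ, pow_succ]
    exact htrans _ _ _ (hmul _ _ _ ih) (by rw [mul_comm (b^n) a, mul_comm (b^n) b]; exact hmul _ _ _ h)

lemma asympGE_mono_aux [CommSemiring S] (le : S → S → Prop)
    (hpre : IsPreorderedSemiring le) (u₁ u₂ : S) (hu₂ : PowerUniversal le u₂)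
    (x y : S) (h : AsympGE le u₁ x y) : AsympGE le u₂ x y := by
  obtain ⟨hrefl, htrans, -, -, hmul⟩ := id hpre
  obtain ⟨k, hk, hle⟩ := h
  obtain ⟨m, hm⟩ : ∃ m : ℕ, le u₁ (u₂ ^ m) := by
    by_cases h0 : u₁ = 0
    · refine ⟨1, ?_⟩
      have := hmul 0 1 (u₂ ^ 1) hpre.2.2.1
      simpa [h0] using this
    · obtain ⟨m, hm, -⟩ := hu₂.2 u₁ h0
      exact ⟨m, hm⟩
  refine ⟨fun n => m * k n, ?_, fun n => ?_⟩
  · have : Tendsto (fun n => (m : ℝ) * ((k n : ℝ) / (n : ℝ))) atTop (𝓝 ((m : ℝ) * 0)) :=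
      hk.const_mul _
    simpa [mul_div_assoc] using this
  · refine htrans _ _ _ (hle n) ?_
    have h1 : le (u₁ ^ k n) ((u₂ ^ m) ^ k n) := pow_le_pow_aux le hpre hm (k n)
    have := hmul _ _ (x ^ n) h1
    rwa [← pow_mul] at this

/-- The asymptotic preorder does not depend on the choice of the power universal element. -/
theorem asympGE_indep_powerUniversal [CommSemiring S] (le : S → S → Prop)
    (hpre : IsPreorderedSemiring le)
    (u₁ u₂ : S) (hu₁ : PowerUniversal le u₁) (hu₂ : PowerUniversal le u₂) :
    ∀ x y : S, AsympGE le u₁ x y ↔ AsympGE le u₂ x y := fun x y =>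
  ⟨asympGE_mono_aux le hpre u₁ u₂ hu₂ x y, asympGE_mono_aux le hpre u₂ u₁ hu₁ x y⟩
end

section
/- Let (S,≼) be a preordered semiring and u ∈ S a power universal element, and let ≾ denote the asymptotic preorder. Then: (i) x ≼ y implies x ≾ y; (ii) (S,≾) is again a preordered semiring, i.e., ≾ is reflexive and transitive, 0 ≾ 1, and x ≾ y implies x + z ≾ y + z and x·z ≾ y·z for all z ∈ S; and (iii) u is power universal with respect to ≾. -/
open scoped NNReal
open Filter Topology

variable {S : Type*}

private lemma sup_div_tendsto_aux (k : ℕ → ℕ)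
    (hk : Tendsto (fun n => (k n : ℝ) / (n : ℝ)) atTop (𝓝 0)) :
    Tendsto (fun n => (((Finset.range (n + 1)).sup k : ℕ) : ℝ) / (n : ℝ)) atTop (𝓝 0) := by
  rw [Metric.tendsto_atTop] at hk ⊢
  intro ε hε
  obtain ⟨N, hN⟩ := hk (ε / 2) (by positivity)
  set C : ℕ := (Finset.range (N + 1)).sup k with hC
  obtain ⟨N2, hN2⟩ := Metric.tendsto_atTop.mp
    (tendsto_const_div_atTop_nhds_zero_nat (C : ℝ)) (ε / 2) (by positivity)
  refine ⟨max (N + 1) N2, fun n hn => ?_⟩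
  have hn1 : N + 1 ≤ n := le_trans (le_max_left _ _) hn
  have hn2 : N2 ≤ n := le_trans (le_max_right _ _) hn
  have hnpos : (0 : ℝ) < n := by
    have : 0 < n := by omega
    exact_mod_cast this
  obtain ⟨i, hi, hKi⟩ := Finset.exists_mem_eq_sup (Finset.range (n + 1)) ⟨0, by simp⟩ k
  have hin : i ≤ n := by simpa using Nat.lt_succ_iff.mp (Finset.mem_range.mp hi)
  rw [Real.dist_eq, sub_zero, abs_of_nonneg (by positivity), hKi]
  by_cases hiN : i ≤ N
  · have hkiC : k i ≤ C := Finset.le_sup (Finset.mem_range.mpr (by omega))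
    have h1 : (k i : ℝ) / n ≤ (C : ℝ) / n := by
      have : (k i : ℝ) ≤ (C : ℝ) := by exact_mod_cast hkiC
      gcongr
    have h2 : (C : ℝ) / n < ε / 2 := by
      have := hN2 n hn2
      rwa [Real.dist_eq, sub_zero, abs_of_nonneg (by positivity)] at this
    linarith
  · have hipos : (0 : ℝ) < i := by
      have : 0 < i := by omega
      exact_mod_cast this
    have h1 : (k i : ℝ) / i < ε / 2 := by
      have := hN i (by omega)
      rwa [Real.dist_eq, sub_zero, abs_of_nonneg (by positivity)] at this
    have h2 : (k i : ℝ) < ε / 2 * i := by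
      rwa [div_lt_iff₀ hipos] at h1
    have h3 : (ε / 2) * i ≤ (ε / 2) * n := by
      have : (i : ℝ) ≤ n := by exact_mod_cast hin
      nlinarith
    rw [div_lt_iff₀ hnpos]
    nlinarith

/-- Basic properties of the asymptotic preorder `≾` (where `x ≾ y ↔ AsympGE le u y x`):
(i) `≼ ⊆ ≾`; (ii) `(S, ≾)` is a preordered semiring; (iii) `u` is power universal for `≾`. -/
theorem asympGE_properties [CommSemiring S] (le : S → S → Prop)
    (hpre : IsPreorderedSemiring le)
    (u : S) (hu : PowerUniversal le u) :
    (∀ x y : S, le x y → AsympGE le u y x) ∧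
      IsPreorderedSemiring (fun a b : S => AsympGE le u b a) ∧
      PowerUniversal (fun a b : S => AsympGE le u b a) u := by
  obtain ⟨hrefl, htrans, h01, hadd, hmul⟩ := hpre
  -- two-sided multiplicative monotonicity
  have hmul2 : ∀ a b c d : S, le a b → le c d → le (a * c) (b * d) := by
    intro a b c d hab hcd
    refine htrans _ _ _ (hmul a b c hab) ?_
    rw [mul_comm b c, mul_comm b d]
    exact hmul c d b hcd
  -- powers are monotone
  have hpow : ∀ (x y : S), le x y → ∀ n : ℕ, le (x ^ n) (y ^ n) := by
    intro x y hxy n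
    induction n with
    | zero => simpa using hrefl 1
    | succ m ih => rw [pow_succ, pow_succ]; exact hmul2 _ _ _ _ ih hxy
  have hone_le_upow : ∀ n : ℕ, le 1 (u ^ n) := by
    intro n
    induction n with
    | zero => simpa using hrefl 1
    | succ m ih =>
      rw [pow_succ]
      have := hmul2 1 (u ^ m) 1 u ih hu.1
      simpa using this
  have hupow_mono : ∀ a b : ℕ, a ≤ b → le (u ^ a) (u ^ b) := by
    intro a b hab
    obtain ⟨c, rfl⟩ := Nat.exists_eq_add_of_le hab
    rw [pow_add]
    have := hmul2 (u ^ a) (u ^ a) 1 (u ^ c) (hrefl _) (hone_le_upow c)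
    simpa using this
  -- finite sums are monotone
  have hsum : ∀ (s : Finset ℕ) (f g : ℕ → S), (∀ i ∈ s, le (f i) (g i)) →
      le (∑ i ∈ s, f i) (∑ i ∈ s, g i) := by
    intro s f g h
    induction s using Finset.cons_induction with
    | empty => simpa using hrefl 0
    | cons a s ha ih =>
      rw [Finset.sum_cons, Finset.sum_cons]
      have h1 : le (f a + ∑ i ∈ s, f i) (g a + ∑ i ∈ s, f i) :=
        hadd _ _ _ (h a (Finset.mem_cons_self a s))
      have h2 : le (g a + ∑ i ∈ s, f i) (g a + ∑ i ∈ s, g i) := by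
        rw [add_comm (g a), add_comm (g a)]
        exact hadd _ _ _ (ih fun i hi => h i (Finset.mem_cons_of_mem hi))
      exact htrans _ _ _ h1 h2
  -- part (i)
  have part1 : ∀ x y : S, le x y → AsympGE le u y x := by
    intro x y hxy
    refine ⟨fun _ => 0, by simpa using tendsto_const_nhds, fun n => ?_⟩
    simpa using hpow x y hxy n
  refine ⟨part1, ⟨?_, ?_, ?_, ?_, ?_⟩, ?_, ?_⟩
  · -- reflexivity
    intro a
    exact part1 a a (hrefl a)
  · -- transitivity
    rintro a b c ⟨k, hk, hkle⟩ ⟨l, hl, hlle⟩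
    refine ⟨fun n => k n + l n, ?_, fun n => ?_⟩
    · have := hk.add hl
      simpa [Nat.cast_add, add_div] using this
    · refine htrans _ _ _ (hkle n) ?_
      have h2 : le (u ^ k n * b ^ n) (u ^ k n * (u ^ l n * c ^ n)) :=
        hmul2 _ _ _ _ (hrefl _) (hlle n)
      refine htrans _ _ _ h2 ?_
      rw [pow_add]
      have : u ^ k n * (u ^ l n * c ^ n) = u ^ k n * u ^ l n * c ^ n := by ring
      rw [this]
      exact hrefl _
  · -- 0 ≾ 1
    refine ⟨fun _ => 0, by simpa using tendsto_const_nhds, fun n => ?_⟩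
    match n with
    | 0 => simpa using hrefl 1
    | m + 1 => simpa using h01
  · -- additive compatibility
    rintro a b c ⟨k, hk, hkle⟩
    refine ⟨fun n => (Finset.range (n + 1)).sup k, sup_div_tendsto_aux k hk, fun n => ?_⟩
    set K := (Finset.range (n + 1)).sup k with hK
    have key : le ((a + c) ^ n) (∑ i ∈ Finset.range (n + 1),
        u ^ K * b ^ i * c ^ (n - i) * (n.choose i : S)) := by
      rw [add_pow]
      refine hsum _ _ _ fun i hi => ?_
      have hik : k i ≤ K := Finset.le_sup hi
      have h1 : le (a ^ i) (u ^ K * b ^ i) :=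
        htrans _ _ _ (hkle i) (hmul _ _ _ (hupow_mono _ _ hik))
      exact hmul _ _ _ (hmul _ _ _ h1)
    refine htrans _ _ _ key ?_
    have : u ^ K * (b + c) ^ n = ∑ i ∈ Finset.range (n + 1),
        u ^ K * b ^ i * c ^ (n - i) * (n.choose i : S) := by
      rw [add_pow, Finset.mul_sum]
      exact Finset.sum_congr rfl fun i _ => by ring
    rw [this]
    exact hrefl _
  · -- multiplicative compatibility
    rintro a b c ⟨k, hk, hkle⟩
    refine ⟨k, hk, fun n => ?_⟩
    rw [mul_pow, mul_pow, ← mul_assoc]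
    exact hmul _ _ _ (hkle n)
  · exact part1 1 u hu.1
  · intro x hx
    obtain ⟨k, h1, h2⟩ := hu.2 x hx
    exact ⟨k, part1 x (u ^ k) h1, part1 1 (u ^ k * x) h2⟩
end

section
/- Let (S,≼) be a preordered semiring with power universal element u, and let x, y ∈ S. If there exists s ∈ S \ {0} such that s·x ≽ s·y, then x ≿ y in the asymptotic preorder. -/
open scoped NNReal
open Filter Topology

variable {S : Type*}

/-- Cancellation: if `s * x ≽ s * y` for some nonzero `s`, then `x ≿ y` asymptotically. -/
theorem asympGE_of_mul_le [CommSemiring S] (le : S → S → Prop)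
    (hpre : IsPreorderedSemiring le)
    (u : S) (hu : PowerUniversal le u) (x y : S)
    (h : ∃ s : S, s ≠ 0 ∧ le (s * y) (s * x)) :
    AsympGE le u x y := by
  obtain ⟨hrefl, htrans, -, -, hmul⟩ := hpre
  obtain ⟨s, hs0, hs⟩ := h
  obtain ⟨k, hsu, hone⟩ := hu.2 s hs0
  refine ⟨fun _ => 2 * k, ?_, ?_⟩
  · simpa using (tendsto_const_div_atTop_nhds_zero_nat (((2 * k : ℕ)) : ℝ))
  · intro n
    -- step 1: s * y ^ n ≼ s * x ^ n
    have key : ∀ m : ℕ, le (s * y ^ m) (s * x ^ m) := by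
      intro m
      induction m with
      | zero => simpa using hrefl s
      | succ m ih =>
        have h1 : le ((s * y) * y ^ m) ((s * x) * y ^ m) := hmul _ _ _ hs
        have h2 : le ((s * y ^ m) * x) ((s * x ^ m) * x) := hmul _ _ _ ih
        have e1 : (s * y) * y ^ m = s * y ^ (m + 1) := by ring
        have e2 : (s * x) * y ^ m = (s * y ^ m) * x := by ring
        have e3 : (s * x ^ m) * x = s * x ^ (m + 1) := by ring
        rw [e1, e2] at h1
        rw [e3] at h2
        exact htrans _ _ _ h1 h2
    have h1 : le (1 * y ^ n) ((u ^ k * s) * y ^ n) := hmul _ _ _ hone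
    have h2 : le ((s * y ^ n) * u ^ k) ((s * x ^ n) * u ^ k) := hmul _ _ _ (key n)
    have h3 : le (s * (x ^ n * u ^ k)) (u ^ k * (x ^ n * u ^ k)) := hmul _ _ _ hsu
    have e1 : (1 : S) * y ^ n = y ^ n := one_mul _
    have e2 : (u ^ k * s) * y ^ n = (s * y ^ n) * u ^ k := by ring
    have e3 : (s * x ^ n) * u ^ k = s * (x ^ n * u ^ k) := by ring
    have e4 : u ^ k * (x ^ n * u ^ k) = u ^ (2 * k) * x ^ n := by ring
    rw [e1, e2] at h1
    rw [e3] at h2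
    rw [e4] at h3
    exact htrans _ _ _ h1 (htrans _ _ _ h2 h3)
end

section
/- Let (S,≼) be a preordered semiring with power universal element u, and let x, y, s, t ∈ S \ {0}. If for all n ∈ ℕ the inequality s·x^n ≽ t·y^n holds, then x ≿ y in the asymptotic preorder. -/
open scoped NNReal
open Filter Topology

variable {S : Type*}

/-- If `s * x ^ n ≽ t * y ^ n` for all `n`, with `x, y, s, t` nonzero,
then `x ≿ y` asymptotically. -/
theorem asympGE_of_small_factors [CommSemiring S] (le : S → S → Prop)
    (hpre : IsPreorderedSemiring le)
    (u : S) (hu : PowerUniversal le u) (x y s t : S)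
    (hx : x ≠ 0) (hy : y ≠ 0) (hs : s ≠ 0) (ht : t ≠ 0)
    (h : ∀ n : ℕ, le (t * y ^ n) (s * x ^ n)) :
    AsympGE le u x y := by
  obtain ⟨_, htrans, _, _, hmul⟩ := hpre
  obtain ⟨k0, hs0, _⟩ := hu.2 s hs
  obtain ⟨k1, _, ht1⟩ := hu.2 t ht
  refine ⟨fun _ => k0 + k1, tendsto_const_div_atTop_nhds_zero_nat _, fun n => ?_⟩
  have step1 : le (y ^ n) (u ^ k1 * (t * y ^ n)) := by
    have := hmul _ _ (y ^ n) ht1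
    simpa [one_mul, mul_assoc] using this
  have step2 : le (u ^ k1 * (t * y ^ n)) (u ^ k1 * (s * x ^ n)) := by
    have := hmul _ _ (u ^ k1) (h n)
    simpa [mul_comm] using this
  have step3 : le (u ^ k1 * (s * x ^ n)) (u ^ (k0 + k1) * x ^ n) := by
    have := hmul _ _ (u ^ k1 * x ^ n) hs0
    have e1 : s * (u ^ k1 * x ^ n) = u ^ k1 * (s * x ^ n) := by ring
    have e2 : u ^ k0 * (u ^ k1 * x ^ n) = u ^ (k0 + k1) * x ^ n := by
      rw [pow_add]; ring
    rw [e1, e2] at this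
    exact this
  exact htrans _ _ _ step1 (htrans _ _ _ step2 step3)
end

section
/- Let (S,≼) be a preordered semiring with power universal element u, let ≾ be the asymptotic preorder, and let ≾≾ be the asymptotic preorder of the preordered semiring (S,≾) formed with the same u (i.e., x ≿≿ y iff there is a sequence (k_n) of naturals with k_n/n → 0 and u^{k_n}·x^n ≿ y^n for all n). Then ≾≾ = ≾: for all x, y ∈ S, x ≿≿ y if and only if x ≿ y. -/
open scoped NNReal
open Filter Topology

variable {S : Type*}

/-- Iterating the asymptotic preorder construction gives nothing new:
the asymptotic preorder of `(S, ≾)` (with the same `u`) equals `≾`. -/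
theorem asympGE_idempotent [CommSemiring S] (le : S → S → Prop)
    (hpre : IsPreorderedSemiring le)
    (u : S) (hu : PowerUniversal le u) :
    ∀ x y : S, AsympGE (fun a b : S => AsympGE le u b a) u x y ↔ AsympGE le u x y := by
  obtain ⟨hrefl, htrans, h01, hadd, hmul⟩ := hpre
  obtain ⟨h1u, hux⟩ := hu
  have heq : ∀ {a b a' b' : S}, a = a' → b = b' → le a b → le a' b' := by
    rintro a b _ _ rfl rfl h; exact h
  have hpow : ∀ (a b : S) (m : ℕ), le a b → le (a ^ m) (b ^ m) := by
    intro a b m hab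
    induction m with
    | zero => simpa using hrefl 1
    | succ m ih =>
        rw [pow_succ, pow_succ]
        exact htrans _ _ _ (hmul _ _ _ ih)
          (heq (mul_comm _ _) (mul_comm _ _) (hmul _ _ _ hab))
  intro x y
  constructor
  · rintro ⟨k, hk, hkn⟩
    classical
    obtain ⟨c, hc⟩ : ∃ c : ℕ, le y (u ^ c) := by
      by_cases hy : y = 0
      · exact ⟨0, heq hy.symm (pow_zero u).symm h01⟩
      · obtain ⟨c, hc, -⟩ := hux y hy
        exact ⟨c, hc⟩
    by_cases hx : x = 0
    · refine ⟨fun _ => 0, by simp, fun n => ?_⟩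
      rcases Nat.eq_zero_or_pos n with rfl | hn
      · simpa using hrefl 1
      · obtain ⟨l, -, hlm⟩ := hkn 1
        exact heq (by simp) (by simp [hx, zero_pow hn.ne']) (hlm n)
    obtain ⟨e, -, he⟩ := hux x hx
    have hex : ∀ n : ℕ, ∃ a : ℕ, le (y ^ n) (u ^ a * x ^ n) := by
      intro n
      refine ⟨(c + e) * n, ?_⟩
      have h1 : le (y ^ n) ((u ^ c) ^ n) := hpow _ _ n hc
      have h2 : le (1 : S) ((u ^ e * x) ^ n) := by simpa using hpow 1 _ n he
      have h3 := hmul _ _ ((u ^ c) ^ n) h2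
      exact htrans _ _ _ h1 (heq (by ring) (by ring) h3)
    set K : ℕ → ℕ := fun n => Nat.find (hex n) with hKdef
    have hK : ∀ n, le (y ^ n) (u ^ K n * x ^ n) := fun n => Nat.find_spec (hex n)
    have hKmin : ∀ n a, le (y ^ n) (u ^ a * x ^ n) → K n ≤ a :=
      fun n a h => Nat.find_min' (hex n) h
    have pad : ∀ N a : ℕ, le (y ^ N) (u ^ a * x ^ N) →
        ∀ j : ℕ, K j ≤ a * (j / N) + (c + e) * (j % N) := by
      intro N a hNa j
      apply hKmin
      have hj : N * (j / N) + j % N = j := Nat.div_add_mod j N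
      set q := j / N with hq
      set r := j % N with hr
      have h1 : le ((y ^ N) ^ q) ((u ^ a * x ^ N) ^ q) := hpow _ _ q hNa
      have h2 : le (y ^ r) ((u ^ c) ^ r) := hpow _ _ r hc
      have h3 : le (1 : S) ((u ^ e * x) ^ r) := by simpa using hpow 1 _ r he
      have s1 : le (y ^ j) ((u ^ a * x ^ N) ^ q * y ^ r) :=
        heq (by rw [← hj]; ring) rfl (hmul _ _ (y ^ r) h1)
      have s2 : le ((u ^ a * x ^ N) ^ q * y ^ r) ((u ^ a * x ^ N) ^ q * (u ^ c) ^ r) :=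
        heq (by ring) (by ring) (hmul _ _ ((u ^ a * x ^ N) ^ q) h2)
      have s3 : le ((u ^ a * x ^ N) ^ q * (u ^ c) ^ r)
          (u ^ (a * q + (c + e) * r) * x ^ j) :=
        heq (by ring) (by rw [← hj]; ring) (hmul _ _ ((u ^ a * x ^ N) ^ q * (u ^ c) ^ r) h3)
      exact htrans _ _ _ s1 (htrans _ _ _ s2 s3)
    refine ⟨K, ?_, hK⟩
    rw [Metric.tendsto_atTop]
    intro ε hε
    -- choose n with k n / n < ε/4 and n ≥ 1
    obtain ⟨n₀, hn₀⟩ := Metric.tendsto_atTop.1 hk (ε / 4) (by linarith)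
    set n := max n₀ 1 with hn
    have hn1 : 1 ≤ n := le_max_right _ _
    have hnR : (1 : ℝ) ≤ (n : ℝ) := by exact_mod_cast hn1
    have hkn4 : (k n : ℝ) / n < ε / 4 := by
      have := hn₀ n (le_max_left _ _)
      rwa [Real.dist_eq, sub_zero,
        abs_of_nonneg (by positivity : (0:ℝ) ≤ (k n : ℝ) / n)] at this
    obtain ⟨l, hl, hlm⟩ := hkn n
    obtain ⟨m₀, hm₀⟩ := Metric.tendsto_atTop.1 hl (ε / 4) (by linarith)
    set m := max m₀ 1 with hm
    have hm1 : 1 ≤ m := le_max_right _ _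
    have hmR : (1 : ℝ) ≤ (m : ℝ) := by exact_mod_cast hm1
    have hlm4 : (l m : ℝ) / m < ε / 4 := by
      have := hm₀ m (le_max_left _ _)
      rwa [Real.dist_eq, sub_zero,
        abs_of_nonneg (by positivity : (0:ℝ) ≤ (l m : ℝ) / m)] at this
    set N := n * m with hN
    set a := l m + k n * m with ha
    have hN0 : 0 < N := Nat.mul_pos hn1 hm1
    have hNR : (0 : ℝ) < (N : ℝ) := by exact_mod_cast hN0
    have hNa : le (y ^ N) (u ^ a * x ^ N) :=
      heq (by rw [hN]; ring) (by rw [hN, ha]; ring) (hlm m)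
    -- a / N < ε / 2
    have haN : (a : ℝ) / N < ε / 2 := by
      have h1 : (a : ℝ) / N = (l m : ℝ) / (n * m) + (k n : ℝ) / n := by
        rw [ha, hN]
        push_cast
        field_simp
      have h2 : (l m : ℝ) / (n * m) ≤ (l m : ℝ) / m := by
        apply div_le_div_of_nonneg_left (by positivity) (by positivity)
        nlinarith
      rw [h1]
      push_cast at h2 ⊢
      linarith
    obtain ⟨J, hJ⟩ := exists_nat_gt (((c : ℝ) + e) * N * 2 / ε)
    refine ⟨max J 1, fun j hj => ?_⟩
    have hj1 : 1 ≤ j := le_trans (le_max_right _ _) hj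
    have hjR : (1 : ℝ) ≤ (j : ℝ) := by exact_mod_cast hj1
    have hjJ : ((c : ℝ) + e) * N * 2 / ε < j := by
      refine lt_of_lt_of_le hJ ?_
      exact_mod_cast le_trans (le_max_left _ _) hj
    have hjpos : (0 : ℝ) < (j : ℝ) := by linarith
    -- bound K j
    have hKj : (K j : ℝ) ≤ (a : ℝ) * ((j : ℝ) / N) + ((c : ℝ) + e) * N := by
      have h1 : K j ≤ a * (j / N) + (c + e) * (j % N) := pad N a hNa j
      have h2 : (c + e) * (j % N) ≤ (c + e) * N :=
        Nat.mul_le_mul_left _ (le_of_lt (Nat.mod_lt _ hN0))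
      have h3 : (K j : ℝ) ≤ (a : ℝ) * ((j / N : ℕ) : ℝ) + ((c : ℝ) + e) * N := by
        have h4 : K j ≤ a * (j / N) + (c + e) * N := le_trans h1 (by omega)
        exact_mod_cast h4
      refine le_trans h3 ?_
      have h5 : ((j / N : ℕ) : ℝ) ≤ (j : ℝ) / N := Nat.cast_div_le
      nlinarith [Nat.cast_nonneg (α := ℝ) a]
    rw [Real.dist_eq, sub_zero, abs_of_nonneg (by positivity : (0:ℝ) ≤ (K j : ℝ) / j)]
    have hmain : (K j : ℝ) / j ≤ (a : ℝ) / N + ((c : ℝ) + e) * N / j := by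
      calc (K j : ℝ) / j ≤ ((a : ℝ) * ((j : ℝ) / N) + ((c : ℝ) + e) * N) / j := by
            gcongr
        _ = (a : ℝ) / N + ((c : ℝ) + e) * N / j := by
            field_simp
    have hlast : ((c : ℝ) + e) * N / j < ε / 2 := by
      rw [div_lt_iff₀ hjpos]
      have h := (div_lt_iff₀ hε).1 hjJ
      linarith
    linarith
  · rintro ⟨k, hk, hle⟩
    refine ⟨k, hk, fun n => ⟨fun _ => 0, by simp, fun m => ?_⟩⟩
    exact heq rfl (by simp) (hpow _ _ m (hle n))
end

section
/- Let (S,≼) be a preordered semiring which is generated as a semiring by a single element u (i.e., every element of S is of the form p(u) for a polynomial p with natural number coefficients). Then the evaluation map ev_u : Δ(S,≼) → ℝ≥0, f ↦ f(u), is a closed embedding; in particular ev_u is proper (preimages of compact sets are compact) and Δ(S,≼) is a locally compact topological space. -/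
open scoped NNReal
open Filter Topology

variable {S : Type*}

set_option maxHeartbeats 1000000 in
/-- If `S` is generated as a semiring by a single element `u`, then the evaluation
map at `u` is a closed embedding; in particular it is proper and the spectrum is
locally compact. -/
theorem spectrum_singly_generated [CommSemiring S] (le : S → S → Prop)
    (hpre : IsPreorderedSemiring le)
    (u : S) (hgen : Subsemiring.closure ({u} : Set S) = ⊤) :
    Topology.IsClosedEmbedding (fun f : ↥(Spectrum le) => f.1 u) ∧
      (∀ K : Set ℝ≥0, IsCompact K →
        IsCompact ((fun f : ↥(Spectrum le) => f.1 u) ⁻¹' K)) ∧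
      LocallyCompactSpace ↥(Spectrum le) := by
  classical
  -- every element of `S` is a ℕ-polynomial in `u`
  have hex : ∀ x : S, ∃ p : Polynomial ℕ,
      Polynomial.eval₂ (Nat.castRingHom S) u p = x := by
    intro x
    have hx : x ∈ Subsemiring.closure ({u} : Set S) := by
      rw [hgen]; trivial
    induction hx using Subsemiring.closure_induction with
    | mem y hy =>
      rcases hy with rfl
      exact ⟨Polynomial.X, Polynomial.eval₂_X _ _⟩
    | zero => exact ⟨0, Polynomial.eval₂_zero _ _⟩
    | one => exact ⟨1, Polynomial.eval₂_one _ _⟩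
    | add a b _ _ iha ihb =>
      obtain ⟨p, hp⟩ := iha; obtain ⟨q, hq⟩ := ihb
      exact ⟨p + q, by rw [Polynomial.eval₂_add, hp, hq]⟩
    | mul a b _ _ iha ihb =>
      obtain ⟨p, hp⟩ := iha; obtain ⟨q, hq⟩ := ihb
      exact ⟨p * q, by rw [Polynomial.eval₂_mul, hp, hq]⟩
  choose p hp using hex
  -- the continuous "section" ℝ≥0 → (S → ℝ≥0)
  set Φ : ℝ≥0 → S → ℝ≥0 := fun t x => Polynomial.eval₂ (Nat.castRingHom ℝ≥0) t (p x)
    with hΦdef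
  have hΦcont : Continuous Φ := by
    apply continuous_pi
    intro x
    have : (fun t => Φ t x) =
        fun t => ((p x).map (Nat.castRingHom ℝ≥0)).eval t := by
      funext t
      rw [Polynomial.eval_map]
    rw [this]
    exact Polynomial.continuous _
  -- Φ recovers spectrum elements
  have hΦev : ∀ f : ↥(Spectrum le), Φ (f.1 u) = f.1 := by
    rintro ⟨f, h0, h1, hadd, hmul, hle⟩
    funext x
    let F : S →+* ℝ≥0 :=
      { toFun := f, map_one' := h1, map_mul' := hmul, map_zero' := h0,
        map_add' := hadd }
    have hcast : (F : S →+* ℝ≥0).comp (Nat.castRingHom S) = Nat.castRingHom ℝ≥0 :=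
      Subsingleton.elim _ _
    have key := Polynomial.hom_eval₂ (p x) (Nat.castRingHom S) F u
    rw [hcast] at key
    have : f x = Polynomial.eval₂ (Nat.castRingHom ℝ≥0) (f u) (p x) := by
      conv_lhs => rw [← hp x]
      exact key
    exact this.symm
  have hcont_ev : Continuous (fun f : ↥(Spectrum le) => f.1 u) :=
    (continuous_apply u).comp continuous_subtype_val
  have hinj : Function.Injective (fun f : ↥(Spectrum le) => f.1 u) := by
    intro f g h
    apply Subtype.ext
    rw [← hΦev f, ← hΦev g]
    simpa using congrArg Φ h
  have hind : Topology.IsInducing (fun f : ↥(Spectrum le) => f.1 u) := by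
    refine Topology.IsInducing.of_comp hcont_ev hΦcont ?_
    have : Φ ∘ (fun f : ↥(Spectrum le) => f.1 u) = Subtype.val := funext hΦev
    rw [this]
    exact Topology.IsInducing.subtypeVal
  -- the spectrum is a closed subset of the product
  have hSpecClosed : IsClosed (Spectrum le) := by
    have : Spectrum le = {f : S → ℝ≥0 | f 0 = 0} ∩ {f | f 1 = 1} ∩
        (⋂ a, ⋂ b, {f : S → ℝ≥0 | f (a + b) = f a + f b}) ∩
        (⋂ a, ⋂ b, {f : S → ℝ≥0 | f (a * b) = f a * f b}) ∩
        (⋂ a, ⋂ b, ⋂ _ : le a b, {f : S → ℝ≥0 | f a ≤ f b}) := by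
      ext f
      simp only [Spectrum, Set.mem_setOf_eq, Set.mem_inter_iff, Set.mem_iInter]
      constructor
      · rintro ⟨a, b, c, d, e⟩; exact ⟨⟨⟨⟨a, b⟩, c⟩, d⟩, e⟩
      · rintro ⟨⟨⟨⟨a, b⟩, c⟩, d⟩, e⟩; exact ⟨a, b, c, d, e⟩
    rw [this]
    have c1 : IsClosed {f : S → ℝ≥0 | f 0 = 0} :=
      isClosed_eq (continuous_apply 0) continuous_const
    have c2 : IsClosed {f : S → ℝ≥0 | f 1 = 1} :=
      isClosed_eq (continuous_apply 1) continuous_const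
    have c3 : IsClosed (⋂ a, ⋂ b, {f : S → ℝ≥0 | f (a + b) = f a + f b}) :=
      isClosed_iInter fun a => isClosed_iInter fun b =>
        isClosed_eq (continuous_apply _) ((continuous_apply a).add (continuous_apply b))
    have c4 : IsClosed (⋂ a, ⋂ b, {f : S → ℝ≥0 | f (a * b) = f a * f b}) :=
      isClosed_iInter fun a => isClosed_iInter fun b =>
        isClosed_eq (continuous_apply _) ((continuous_apply a).mul (continuous_apply b))
    have c5 : IsClosed (⋂ a, ⋂ b, ⋂ _ : le a b, {f : S → ℝ≥0 | f a ≤ f b}) :=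
      isClosed_iInter fun a => isClosed_iInter fun b => isClosed_iInter fun _ =>
        isClosed_le (continuous_apply a) (continuous_apply b)
    exact (((c1.inter c2).inter c3).inter c4).inter c5
  -- the range of the evaluation map is closed
  have hrange : IsClosed (Set.range (fun f : ↥(Spectrum le) => f.1 u)) := by
    have hr : Set.range (fun f : ↥(Spectrum le) => f.1 u) =
        Φ ⁻¹' (Spectrum le) ∩ {t : ℝ≥0 | Φ t u = t} := by
      ext t
      constructor
      · rintro ⟨f, rfl⟩
        have := hΦev f
        constructor
        · show Φ (f.1 u) ∈ Spectrum le
          rw [this]; exact f.2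
        · show Φ (f.1 u) u = f.1 u
          rw [this]
      · rintro ⟨hmem, heq⟩
        exact ⟨⟨Φ t, hmem⟩, heq⟩
    rw [hr]
    exact (hSpecClosed.preimage hΦcont).inter
      (isClosed_eq ((continuous_apply u).comp hΦcont) continuous_id)
  have hce : Topology.IsClosedEmbedding (fun f : ↥(Spectrum le) => f.1 u) :=
    ⟨⟨hind, hinj⟩, hrange⟩
  refine ⟨hce, fun K hK => ?_, hce.locallyCompactSpace⟩
  exact hce.isProperMap.isCompact_preimage hK
end

section
/- Let (S₁,≼₁) and (S₂,≼₂) be preordered semirings and φ : S₁ → S₂ a monotone semiring homomorphism. Suppose that for every x₂ ∈ S₂ there is an x₁ ∈ S₁ such that x₂ ≼₂ φ(x₁). Then the induced map Δ(φ) : Δ(S₂,≼₂) → Δ(S₁,≼₁), f ↦ f ∘ φ, is continuous and proper (the preimage of every compact set is compact). -/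
open scoped NNReal
open Filter Topology

variable {S : Type*}

/-- A monotone semiring homomorphism `φ : S₁ → S₂` whose image is cofinal for `≼₂`
induces a continuous proper map `Δ(φ) : Δ(S₂, ≼₂) → Δ(S₁, ≼₁)`, `f ↦ f ∘ φ`. -/
theorem spectrum_map_continuous_proper {S₁ S₂ : Type*} [CommSemiring S₁] [CommSemiring S₂]
    (le₁ : S₁ → S₁ → Prop) (le₂ : S₂ → S₂ → Prop)
    (hpre₁ : IsPreorderedSemiring le₁) (hpre₂ : IsPreorderedSemiring le₂)
    (φ : S₁ →+* S₂) (hmono : ∀ a b : S₁, le₁ a b → le₂ (φ a) (φ b))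
    (hcofinal : ∀ x₂ : S₂, ∃ x₁ : S₁, le₂ x₂ (φ x₁)) :
    ∀ D : ↥(Spectrum le₂) → ↥(Spectrum le₁),
      (∀ (f : ↥(Spectrum le₂)) (s : S₁), (D f).1 s = f.1 (φ s)) →
      Continuous D ∧ ∀ K : Set ↥(Spectrum le₁), IsCompact K → IsCompact (D ⁻¹' K) := by
  intro D hD
  constructor
  · -- continuity
    apply continuous_induced_rng.2
    have : (Subtype.val ∘ D) = fun f : ↥(Spectrum le₂) => fun s : S₁ => f.1 (φ s) := by
      funext f
      funext s
      exact hD f s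
    rw [this]
    exact continuous_pi fun s => (continuous_apply (φ s)).comp continuous_subtype_val
  · intro K hK
    -- work in the ambient product space
    rw [IsEmbedding.subtypeVal.isCompact_iff]
    set K' : Set (S₁ → ℝ≥0) := Subtype.val '' K with hK'def
    have hK'comp : IsCompact K' := hK.image continuous_subtype_val
    have hK'closed : IsClosed K' := hK'comp.isClosed
    -- characterize the image
    have himg : Subtype.val '' (D ⁻¹' K) =
        Spectrum le₂ ∩ {g : S₂ → ℝ≥0 | (fun s => g (φ s)) ∈ K'} := by
      ext g
      constructor
      · rintro ⟨f, hf, rfl⟩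
        refine ⟨f.2, ?_⟩
        have : (fun s => f.1 (φ s)) = (D f).1 := by
          funext s; exact (hD f s).symm
        rw [Set.mem_setOf_eq, this]
        exact ⟨D f, hf, rfl⟩
      · rintro ⟨hg, hgK⟩
        obtain ⟨h, hhK, hh⟩ := hgK
        refine ⟨⟨g, hg⟩, ?_, rfl⟩
        have : D ⟨g, hg⟩ = h := by
          apply Subtype.ext
          funext s
          rw [hD ⟨g, hg⟩ s]
          exact congrFun hh s ▸ rfl
        rw [Set.mem_preimage, this]
        exact hhK
    rw [himg]
    -- coordinatewise bounds via cofinality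
    have hbound : ∀ x₂ : S₂, ∃ B : ℝ≥0, ∀ g : S₂ → ℝ≥0,
        g ∈ Spectrum le₂ → (fun s => g (φ s)) ∈ K' → g x₂ ≤ B := by
      intro x₂
      obtain ⟨x₁, hx₁⟩ := hcofinal x₂
      have hcomp : IsCompact ((fun h : S₁ → ℝ≥0 => h x₁) '' K') :=
        hK'comp.image (continuous_apply x₁)
      obtain ⟨B, hB⟩ := hcomp.bddAbove
      refine ⟨B, fun g hg hgK => ?_⟩
      have h1 : g x₂ ≤ g (φ x₁) := hg.2.2.2.2 _ _ hx₁
      have h2 : g (φ x₁) ≤ B := hB ⟨_, hgK, rfl⟩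
      exact h1.trans h2
    choose B hB using hbound
    apply IsCompact.of_isClosed_subset (isCompact_univ_pi fun x => isCompact_Icc (a := 0) (b := B x))
    · exact (isClosed_spectrum le₂).inter
        (hK'closed.preimage (continuous_pi fun s => continuous_apply (φ s)))
    · rintro g ⟨hg, hgK⟩
      intro x _
      exact ⟨zero_le, hB x g hg hgK⟩
end

section
/- Let (S,≼) be a preordered semiring of polynomial growth and let ≾ denote the asymptotic preorder. Then a map f : S → ℝ≥0 is a ≼-monotone semiring homomorphism if and only if it is a ≾-monotone semiring homomorphism; consequently the identity map of S induces a homeomorphism Δ(S,≾) → Δ(S,≼). -/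
open scoped NNReal
open Filter Topology

variable {S : Type*}

/-- Replacing the preorder by the asymptotic preorder does not change the spectrum:
`f` is a `≼`-monotone homomorphism iff it is a `≾`-monotone homomorphism, and
the identity induces a homeomorphism `Δ(S, ≾) → Δ(S, ≼)`. -/
theorem spectrum_asympGE_eq [CommSemiring S] (le : S → S → Prop)
    (hpre : IsPreorderedSemiring le)
    (u : S) (hu : PowerUniversal le u) :
    Spectrum (fun a b : S => AsympGE le u b a) = Spectrum le ∧
      ∃ h : ↥(Spectrum (fun a b : S => AsympGE le u b a)) ≃ₜ ↥(Spectrum le),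
        ∀ f, ((h f : S → ℝ≥0)) = (f : S → ℝ≥0) := by
  obtain ⟨hrefl, htrans, h01, hadd, hmul⟩ := hpre
  have hpow : ∀ a b : S, le a b → ∀ n : ℕ, le (a ^ n) (b ^ n) := by
    intro a b hab n
    induction n with
    | zero => simpa using hrefl 1
    | succ n ih =>
      rw [pow_succ, pow_succ]
      exact htrans _ _ _ (by simpa [mul_comm] using hmul a b (a ^ n) hab)
        (hmul (a ^ n) (b ^ n) b ih)
  have hset : Spectrum (fun a b : S => AsympGE le u b a) = Spectrum le := by
    ext f
    simp only [Spectrum, Set.mem_setOf_eq]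
    constructor
    · rintro ⟨h0, h1, ha, hm, hmono⟩
      refine ⟨h0, h1, ha, hm, fun a b hab => ?_⟩
      refine hmono a b ⟨fun _ => 0, by simpa using tendsto_const_nhds, fun n => ?_⟩
      simpa using hpow a b hab n
    · rintro ⟨h0, h1, ha, hm, hmono⟩
      refine ⟨h0, h1, ha, hm, fun a b hab => ?_⟩
      obtain ⟨k, hk, hkn⟩ := hab
      have hfpow : ∀ (x : S) (n : ℕ), f (x ^ n) = f x ^ n := by
        intro x n
        induction n with
        | zero => simpa using h1
        | succ n ih => rw [pow_succ, hm, ih, pow_succ]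
      have hfu : 1 ≤ f u := by
        have := hmono 1 u hu.1
        rwa [h1] at this
      have hfu' : (0:ℝ) < (f u : ℝ) := lt_of_lt_of_le one_pos (by exact_mod_cast hfu)
      have key : ∀ n : ℕ, 1 ≤ n →
          (f a : ℝ) ≤ (f u : ℝ) ^ ((k n : ℝ) / (n : ℝ)) * (f b : ℝ) := by
        intro n hn
        have h1' := hmono _ _ (hkn n)
        rw [hfpow, hm, hfpow, hfpow] at h1'
        have h2 : (f a : ℝ) ^ n ≤ (f u : ℝ) ^ (k n) * (f b : ℝ) ^ n := by
          exact_mod_cast h1'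
        have hn0 : (0:ℝ) < (n : ℝ) := by exact_mod_cast hn
        have h3 := Real.rpow_le_rpow (by positivity) h2
          (le_of_lt (by positivity : (0:ℝ) < 1 / (n:ℝ)))
        have e1 : ((f a : ℝ) ^ n) ^ ((1:ℝ)/(n:ℝ)) = (f a : ℝ) := by
          rw [← Real.rpow_natCast (f a : ℝ) n, ← Real.rpow_mul (by positivity),
            mul_one_div, div_self (ne_of_gt hn0), Real.rpow_one]
        have e2 : ((f u : ℝ) ^ (k n) * (f b : ℝ) ^ n) ^ ((1:ℝ)/(n:ℝ)) =
            (f u : ℝ) ^ ((k n : ℝ) / (n : ℝ)) * (f b : ℝ) := by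
          rw [Real.mul_rpow (by positivity) (by positivity),
            ← Real.rpow_natCast (f u : ℝ) (k n), ← Real.rpow_mul (by positivity),
            mul_one_div,
            ← Real.rpow_natCast (f b : ℝ) n, ← Real.rpow_mul (by positivity),
            mul_one_div, div_self (ne_of_gt hn0), Real.rpow_one]
        rw [e1, e2] at h3
        exact h3
      have hlim : Tendsto (fun n : ℕ => (f u : ℝ) ^ ((k n : ℝ) / (n : ℝ)) * (f b : ℝ))
          atTop (𝓝 ((f u : ℝ) ^ (0:ℝ) * (f b : ℝ))) := by
        exact (((Real.continuousAt_const_rpow (ne_of_gt hfu')).tendsto.comp hk).mul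
          tendsto_const_nhds)
      rw [Real.rpow_zero, one_mul] at hlim
      have : (f a : ℝ) ≤ (f b : ℝ) :=
        ge_of_tendsto hlim (Filter.eventually_atTop.2 ⟨1, fun n hn => key n hn⟩)
      exact_mod_cast this
  exact ⟨hset, Homeomorph.setCongr hset, fun f => rfl⟩
end

section
/- Let (S,≼) be a preordered semiring, S₀ ⊆ S a subsemiring, and f ∈ Δ(S₀,≼) a monotone semiring homomorphism S₀ → ℝ≥0. Let ≼_f denote the preorder ≼_{R_f} on S, where R_f = {(x,y) ∈ S₀ × S₀ : f(x) ≤ f(y)}. Then a semiring homomorphism g : S → ℝ≥0 is ≼_f-monotone if and only if g is ≼-monotone and the restriction of g to S₀ equals f. (Equivalently, Δ(S,≼_f) is the preimage of {f} under the restriction map Δ(S,≼) → Δ(S₀,≼).) -/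
open scoped NNReal
open Filter Topology

variable {S : Type*}

/-- The relation `≼_R` obtained from `≼` by forcing the pairs in `R`. -/
def RelLE [CommSemiring S] (le : S → S → Prop) (R : Set (S × S)) (a b : S) : Prop :=
  ∃ (n : ℕ) (s x y : Fin n → S), (∀ i, (x i, y i) ∈ R) ∧
    le (a + ∑ i, s i * y i) (b + ∑ i, s i * x i)

private lemma nnreal_le_of_forall_mul {a b : ℝ≥0} (h : ∀ n : ℕ, (n : ℝ≥0) * a ≤ n * b + 1) :
    a ≤ b := by
  by_contra hc
  push_neg at hc
  have hd : (0:ℝ) < (a:ℝ) - b := sub_pos.mpr (by exact_mod_cast hc)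
  obtain ⟨n, hn⟩ := exists_nat_gt (1 / ((a:ℝ) - b))
  have h' : (n:ℝ) * a ≤ n * b + 1 := by exact_mod_cast h n
  have h1 : (n:ℝ) * ((a:ℝ) - b) ≤ 1 := by nlinarith
  have h2 : (n:ℝ) ≤ 1 / ((a:ℝ) - b) := by rw [le_div_iff₀ hd]; linarith
  linarith

/-- For a subsemiring `S₀` and `f ∈ Δ(S₀, ≼)`, a semiring homomorphism `g : S → ℝ≥0`
is `≼_f`-monotone (where `≼_f = ≼_{R_f}`, `R_f = {(x, y) ∈ S₀ × S₀ : f x ≤ f y}`)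
iff `g` is `≼`-monotone and `g` restricts to `f` on `S₀`. -/
theorem spectrum_relLE_preimage [CommSemiring S] (le : S → S → Prop)
    (hpre : IsPreorderedSemiring le)
    (S₀ : Subsemiring S) (f : S₀ → ℝ≥0)
    (hf : f ∈ Spectrum (fun a b : S₀ => le (a : S) (b : S))) :
    ∀ g : S → ℝ≥0, g 0 = 0 → g 1 = 1 → (∀ a b, g (a + b) = g a + g b) →
      (∀ a b, g (a * b) = g a * g b) →
      ((∀ a b : S,
          RelLE le {p : S × S | ∃ hx : p.1 ∈ S₀, ∃ hy : p.2 ∈ S₀, f ⟨p.1, hx⟩ ≤ f ⟨p.2, hy⟩} a b →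
          g a ≤ g b) ↔
        ((∀ a b : S, le a b → g a ≤ g b) ∧ ∀ x : S₀, g x = f x)) := by
  obtain ⟨hrefl, htrans, h01, hadd, hmul⟩ := hpre
  obtain ⟨hf0, hf1, hfadd, hfmul, hfmono⟩ := hf
  intro g hg0 hg1 hgadd hgmul
  have gsmul : ∀ (n : ℕ) (a : S), g (n • a) = n * g a := by
    intro n a
    induction n with
    | zero => simp [hg0]
    | succ n ih => rw [succ_nsmul, hgadd, ih]; push_cast; ring
  have fsmul : ∀ (n : ℕ) (a : S₀), f (n • a) = n * f a := by
    intro n a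
    induction n with
    | zero => simpa using hf0
    | succ n ih => rw [succ_nsmul, hfadd, ih]; push_cast; ring
  constructor
  · intro hg
    have hmono : ∀ a b : S, le a b → g a ≤ g b := by
      intro a b hab
      refine hg a b ⟨0, ![], ![], ![], fun i => i.elim0, ?_⟩
      simpa using hab
    have claimA : ∀ a b : S₀, f a ≤ f b → g ↑a ≤ g ↑b := by
      intro a b hab
      refine hg ↑a ↑b ⟨1, fun _ => 1, fun _ => ↑a, fun _ => ↑b, ?_, ?_⟩
      · intro i
        exact ⟨a.2, b.2, by simpa using hab⟩
      · simp only [Fin.sum_univ_one, one_mul]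
        rw [add_comm (↑a : S) ↑b]
        exact hrefl _
    refine ⟨hmono, ?_⟩
    intro x
    have coesmul : ∀ (n : ℕ) (z : S₀), ((n • z : S₀) : S) = n • (z : S) := by
      intro n z; exact AddSubmonoidClass.coe_nsmul z n
    have hB : ∀ m n : ℕ, (n : ℝ≥0) * f x ≤ m → (n : ℝ≥0) * g ↑x ≤ m := by
      intro m n h
      have hc := claimA (n • x) (m • 1) (by rw [fsmul, fsmul, hf1]; simpa using h)
      rw [coesmul, coesmul, gsmul, gsmul] at hc
      simpa [hg1] using hc
    have hB' : ∀ m n : ℕ, (m : ℝ≥0) ≤ n * f x → (m : ℝ≥0) ≤ n * g ↑x := by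
      intro m n h
      have hc := claimA (m • 1) (n • x) (by rw [fsmul, fsmul, hf1]; simpa using h)
      rw [coesmul, coesmul, gsmul, gsmul] at hc
      simpa [hg1] using hc
    refine le_antisymm (nnreal_le_of_forall_mul fun n => ?_)
      (nnreal_le_of_forall_mul fun n => ?_)
    · have h1 : (n : ℝ≥0) * f x ≤ ⌈(n : ℝ≥0) * f x⌉₊ := Nat.le_ceil _
      have h2 := hB ⌈(n : ℝ≥0) * f x⌉₊ n h1
      exact h2.trans (Nat.ceil_lt_add_one zero_le).le
    · have h1 : ((⌊(n : ℝ≥0) * f x⌋₊ : ℝ≥0)) ≤ (n : ℝ≥0) * f x := Nat.floor_le zero_le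
      have h2 := hB' ⌊(n : ℝ≥0) * f x⌋₊ n h1
      exact (Nat.lt_floor_add_one _).le.trans (add_le_add_left h2 1)
  · rintro ⟨hmono, hres⟩ a b ⟨n, s, x, y, hR, hle'⟩
    have h1 := hmono _ _ hle'
    have gsum : ∀ (t : Fin n → S), g (∑ i, t i) = ∑ i, g (t i) := by
      intro t
      exact map_sum (⟨⟨g, hg0⟩, hgadd⟩ : S →+ ℝ≥0) t Finset.univ
    rw [hgadd, hgadd, gsum, gsum] at h1
    simp only [hgmul] at h1
    have hxy : ∀ i, g (x i) ≤ g (y i) := by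
      intro i
      obtain ⟨hx, hy, hfi⟩ := hR i
      calc g (x i) = f ⟨x i, hx⟩ := hres ⟨x i, hx⟩
        _ ≤ f ⟨y i, hy⟩ := hfi
        _ = g (y i) := (hres ⟨y i, hy⟩).symm
    have h2 : ∑ i, g (s i) * g (x i) ≤ ∑ i, g (s i) * g (y i) :=
      Finset.sum_le_sum fun i _ => mul_le_mul_right (hxy i) _
    exact le_of_add_le_add_right (h1.trans (add_le_add_right h2 _))
end

section
/- Let (S,≼) be a preordered semiring and S₀ ⊆ S a subsemiring such that for every s ∈ S \ {0} there exist r, q ∈ S₀ with 1 ≼ r·s and r·s ≼ q. Let R ⊆ S₀ × S₀ be an arbitrary relation and let ≼_R be the induced preorder on S. Then a semiring homomorphism f : S₀ → ℝ≥0 is monotone with respect to the restriction of ≼_R to S₀ if and only if f is monotone with respect to the restriction of ≼ to S₀ and f(x) ≤ f(y) for every pair (x,y) ∈ R. -/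
open scoped NNReal
open Filter Topology

variable {S : Type*}

lemma tele_aux' [CommSemiring S] (le : S → S → Prop)
    (hrefl : ∀ a, le a a) (htrans : ∀ a b c, le a b → le b c → le a c)
    (hadd : ∀ a b c : S, le a b → le (a + c) (b + c))
    (hmul : ∀ a b c : S, le a b → le (a * c) (b * c))
    (A B s x y : S) (h : le (A + s * y) (B + s * x)) :
    ∀ k : ℕ, le (A * (∑ j ∈ Finset.range k, x ^ j * y ^ (k - 1 - j)) + s * y ^ k)
      (B * (∑ j ∈ Finset.range k, x ^ j * y ^ (k - 1 - j)) + s * x ^ k) := by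
  intro k
  induction k with
  | zero => simpa using hrefl s
  | succ k ih =>
    have hT : (∑ j ∈ Finset.range (k + 1), x ^ j * y ^ (k + 1 - 1 - j))
        = y * (∑ j ∈ Finset.range k, x ^ j * y ^ (k - 1 - j)) + x ^ k := by
      rw [Finset.sum_range_succ, Finset.mul_sum]
      congr 1
      · refine Finset.sum_congr rfl fun j hj => ?_
        have hj' : j < k := Finset.mem_range.mp hj
        have he : k + 1 - 1 - j = (k - 1 - j) + 1 := by omega
        rw [he, pow_succ]; ring
      · have he : k + 1 - 1 - k = 0 := by omega
        rw [he, pow_zero, mul_one]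
    rw [hT]
    set T := ∑ j ∈ Finset.range k, x ^ j * y ^ (k - 1 - j) with hTdef
    have e0 : A * (y * T + x ^ k) + s * y ^ (k + 1) = (A * T + s * y ^ k) * y + A * x ^ k := by
      ring
    rw [e0]
    have step1 : le ((A * T + s * y ^ k) * y + A * x ^ k) ((B * T + s * x ^ k) * y + A * x ^ k) :=
      hadd _ _ _ (hmul _ _ _ ih)
    have step2 : le ((B * T + s * x ^ k) * y + A * x ^ k)
        (B * (y * T + x ^ k) + s * x ^ (k + 1)) := by
      have h2 := hadd _ _ (B * T * y) (hmul _ _ (x ^ k) h)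
      have e1 : (B * T + s * x ^ k) * y + A * x ^ k = (A + s * y) * x ^ k + B * T * y := by ring
      have e2 : (B + s * x) * x ^ k + B * T * y = B * (y * T + x ^ k) + s * x ^ (k + 1) := by ring
      rw [e1, ← e2]; exact h2
    exact htrans _ _ _ step1 step2


lemma num_aux' (ρ κ ξ η α β : ℝ≥0) (hρ : ρ ≠ 0) (hξη : ξ ≤ η)
    (h : ∀ k : ℕ, η ^ k + ρ * α * (∑ j ∈ Finset.range k, ξ ^ j * η ^ (k - 1 - j))
      ≤ κ * ξ ^ k + ρ * β * (∑ j ∈ Finset.range k, ξ ^ j * η ^ (k - 1 - j))) :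
    α ≤ β := by
  by_contra hc
  push_neg at hc
  have hρ' : (0 : ℝ) < ρ := by
    have := pos_iff_ne_zero.mpr hρ
    exact_mod_cast this
  have hαβ : (β : ℝ) < α := by exact_mod_cast hc
  have hξη' : (ξ : ℝ) ≤ η := by exact_mod_cast hξη
  have hξ0 : (0 : ℝ) ≤ ξ := ξ.coe_nonneg
  set δ : ℝ := ρ * ((α : ℝ) - β) with hδdef
  have hδ : 0 < δ := by
    apply mul_pos hρ'
    linarith
  have h' : ∀ k : ℕ, (η : ℝ) ^ k + ρ * α * (∑ j ∈ Finset.range k, (ξ : ℝ) ^ j * (η : ℝ) ^ (k - 1 - j))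
      ≤ κ * ξ ^ k + ρ * β * (∑ j ∈ Finset.range k, (ξ : ℝ) ^ j * (η : ℝ) ^ (k - 1 - j)) := by
    intro k
    exact_mod_cast h k
  have hkey : ∀ k : ℕ, δ * ((k + 1 : ℕ) : ℝ) * (ξ : ℝ) ^ k ≤ κ * ξ * (ξ : ℝ) ^ k := by
    intro k
    have hk := h' (k + 1)
    set τ : ℝ := ∑ j ∈ Finset.range (k + 1), (ξ : ℝ) ^ j * (η : ℝ) ^ (k + 1 - 1 - j) with hτdef
    have hτlb : ((k + 1 : ℕ) : ℝ) * (ξ : ℝ) ^ k ≤ τ := by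
      have hterm : ∀ j ∈ Finset.range (k + 1),
          (ξ : ℝ) ^ k ≤ (ξ : ℝ) ^ j * (η : ℝ) ^ (k + 1 - 1 - j) := by
        intro j hj
        have hj' : j < k + 1 := Finset.mem_range.mp hj
        have he : k + 1 - 1 - j = k - j := by omega
        rw [he]
        have h1 : (ξ : ℝ) ^ k = (ξ : ℝ) ^ j * (ξ : ℝ) ^ (k - j) := by
          rw [← pow_add]; congr 1; omega
        rw [h1]
        have hle : (ξ : ℝ) ^ (k - j) ≤ (η : ℝ) ^ (k - j) := pow_le_pow_left₀ hξ0 hξη' _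
        exact mul_le_mul_of_nonneg_left hle (by positivity)
      have := Finset.card_nsmul_le_sum (Finset.range (k + 1)) _ _ hterm
      simpa [Finset.card_range, nsmul_eq_mul, hτdef] using this
    have hηξ : (ξ : ℝ) ^ (k + 1) ≤ (η : ℝ) ^ (k + 1) := pow_le_pow_left₀ hξ0 hξη' _
    have hbt : δ * (((k + 1 : ℕ) : ℝ) * (ξ : ℝ) ^ k) ≤ δ * τ :=
      mul_le_mul_of_nonneg_left hτlb hδ.le
    have hδτ : δ * τ ≤ κ * ξ ^ (k + 1) - (η : ℝ) ^ (k + 1) := by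
      have hδτ' : ρ * α * τ - ρ * β * τ = δ * τ := by ring
      nlinarith [hk]
    have hfin : κ * (ξ : ℝ) ^ (k + 1) - (η : ℝ) ^ (k + 1) ≤ κ * ξ * (ξ : ℝ) ^ k := by
      have he : κ * (ξ : ℝ) ^ (k + 1) = κ * ξ * (ξ : ℝ) ^ k := by ring
      nlinarith [pow_nonneg (le_trans hξ0 hξη') (k + 1)]
    calc δ * ((k + 1 : ℕ) : ℝ) * (ξ : ℝ) ^ k
        = δ * (((k + 1 : ℕ) : ℝ) * (ξ : ℝ) ^ k) := by ring
      _ ≤ δ * τ := hbt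
      _ ≤ κ * ξ ^ (k + 1) - (η : ℝ) ^ (k + 1) := hδτ
      _ ≤ κ * ξ * (ξ : ℝ) ^ k := hfin
  by_cases hξz : (ξ : ℝ) = 0
  · have := hkey 0
    simp [hξz] at this
    nlinarith
  · have hξpos : (0 : ℝ) < ξ := lt_of_le_of_ne hξ0 (Ne.symm hξz)
    have hdiv : ∀ k : ℕ, δ * ((k + 1 : ℕ) : ℝ) ≤ κ * ξ := by
      intro k
      exact le_of_mul_le_mul_right (hkey k) (pow_pos hξpos k)
    obtain ⟨k, hk⟩ := exists_nat_gt ((κ * ξ : ℝ) / δ)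
    have h1 := hdiv k
    have h2 : (κ * ξ : ℝ) < δ * k := by
      rw [div_lt_iff₀ hδ] at hk
      linarith [hk]
    have h3 : δ * (k : ℝ) ≤ δ * ((k + 1 : ℕ) : ℝ) := by
      apply mul_le_mul_of_nonneg_left _ hδ.le
      push_cast; linarith
    linarith

/-- Let `S₀ ≤ S` be a subsemiring such that every nonzero `s ∈ S` satisfies
`1 ≼ r·s ≼ q` for some `r, q ∈ S₀`, and `R ⊆ S₀ × S₀`. Then a semiring
homomorphism `f : S₀ → ℝ≥0` is monotone for the restriction of `≼_R` to `S₀`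
iff it is monotone for the restriction of `≼` and satisfies `f x ≤ f y` for all
`(x, y) ∈ R`. -/
theorem spectrum_relLE_restriction [CommSemiring S] (le : S → S → Prop)
    (hpre : IsPreorderedSemiring le)
    (S₀ : Subsemiring S)
    (hS₀ : ∀ s : S, s ≠ 0 → ∃ r ∈ S₀, ∃ q ∈ S₀, le 1 (r * s) ∧ le (r * s) q)
    (R : Set (S × S)) (hR : ∀ p ∈ R, p.1 ∈ S₀ ∧ p.2 ∈ S₀)
    (f : S₀ → ℝ≥0) (hf0 : f 0 = 0) (hf1 : f 1 = 1)
    (hfadd : ∀ a b : S₀, f (a + b) = f a + f b)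
    (hfmul : ∀ a b : S₀, f (a * b) = f a * f b) :
    (∀ a b : S₀, RelLE le R (a : S) (b : S) → f a ≤ f b) ↔
      ((∀ a b : S₀, le (a : S) (b : S) → f a ≤ f b) ∧
        ∀ p, ∀ hp : p ∈ R, f ⟨p.1, (hR p hp).1⟩ ≤ f ⟨p.2, (hR p hp).2⟩) := by
  obtain ⟨hrefl, htrans, h01, hadd, hmul⟩ := hpre
  constructor
  · intro hmono
    constructor
    · intro a b hab
      apply hmono a b
      exact ⟨0, (fun i => Fin.elim0 i), (fun i => Fin.elim0 i), (fun i => Fin.elim0 i),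
        fun i => Fin.elim0 i, by simpa using hab⟩
    · intro p hp
      apply hmono ⟨p.1, (hR p hp).1⟩ ⟨p.2, (hR p hp).2⟩
      refine ⟨1, (fun _ => 1), (fun _ => p.1), (fun _ => p.2), fun i => hp, ?_⟩
      simp only [Fin.sum_univ_one, one_mul]
      show le (p.1 + p.2) (p.2 + p.1)
      rw [add_comm]
      exact hrefl _
  · rintro ⟨hmono, hpairs⟩ a b ⟨n, s, xx, yy, hmem, hle⟩
    -- homomorphism helper lemmas
    have hfpow : ∀ (z : S₀) (k : ℕ), f (z ^ k) = f z ^ k := by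
      intro z k
      induction k with
      | zero => simpa using hf1
      | succ k ih => rw [pow_succ, hfmul, ih, pow_succ]
    have hfsum : ∀ (k : ℕ) (g : ℕ → S₀),
        f (∑ j ∈ Finset.range k, g j) = ∑ j ∈ Finset.range k, f (g j) := by
      intro k g
      induction k with
      | zero => simpa using hf0
      | succ k ih => rw [Finset.sum_range_succ, hfadd, ih, Finset.sum_range_succ]
    have hpos : ∀ c : S₀, (c : S) ≠ 0 → f c ≠ 0 := by
      intro c hc hf
      obtain ⟨r, hrm, q, hqm, h1, h2⟩ := hS₀ (c : S) hc
      have hco : le ((1 : S₀) : S) (((⟨r, hrm⟩ : S₀) * c : S₀) : S) := by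
        push_cast
        exact h1
      have := hmono 1 (⟨r, hrm⟩ * c) hco
      rw [hf1, hfmul, hf, mul_zero] at this
      exact absurd this (by norm_num)
    -- the main induction
    have key : ∀ (m : ℕ) (s : Fin m → S) (xx yy : Fin m → S)
        (hx : ∀ i, xx i ∈ S₀) (hy : ∀ i, yy i ∈ S₀),
        (∀ i, f ⟨xx i, hx i⟩ ≤ f ⟨yy i, hy i⟩) →
        ∀ a b : S₀, le ((a : S) + ∑ i, s i * yy i) ((b : S) + ∑ i, s i * xx i) → f a ≤ f b := by
      intro m
      induction m with
      | zero =>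
        intro s xx yy hx hy hfxy a b hle
        simp only [Finset.univ_eq_empty, Finset.sum_empty, add_zero] at hle
        exact hmono a b hle
      | succ m IH =>
        intro s xx yy hx hy hfxy a b hle
        rw [Fin.sum_univ_castSucc (f := fun i => s i * yy i),
          Fin.sum_univ_castSucc (f := fun i => s i * xx i), ← add_assoc, ← add_assoc] at hle
        by_cases hsl : s (Fin.last m) = 0
        · simp only [hsl, zero_mul, add_zero] at hle
          exact IH _ _ _ (fun i => hx i.castSucc) (fun i => hy i.castSucc)
            (fun i => hfxy i.castSucc) a b hle
        · obtain ⟨r, hrm, q, hqm, h1, h2⟩ := hS₀ _ hsl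
          by_cases hr0 : r = 0
          · rw [hr0, zero_mul] at h1
            have hab : le (a : S) (b : S) := by
              have h1a := hmul _ _ (a : S) h1
              rw [one_mul, zero_mul] at h1a
              have h0b := hmul _ _ (b : S) h01
              rw [zero_mul, one_mul] at h0b
              exact htrans _ _ _ h1a h0b
            exact hmono a b hab
          · -- notation
            have hxl : xx (Fin.last m) ∈ S₀ := hx _
            have hyl : yy (Fin.last m) ∈ S₀ := hy _
            have hfrne : f ⟨r, hrm⟩ ≠ 0 := hpos ⟨r, hrm⟩ hr0
            have hnum : ∀ k : ℕ,
                f ⟨yy (Fin.last m), hyl⟩ ^ k + f ⟨r, hrm⟩ * f a *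
                  (∑ j ∈ Finset.range k,
                    f ⟨xx (Fin.last m), hxl⟩ ^ j * f ⟨yy (Fin.last m), hyl⟩ ^ (k - 1 - j))
                ≤ f ⟨q, hqm⟩ * f ⟨xx (Fin.last m), hxl⟩ ^ k + f ⟨r, hrm⟩ * f b *
                  (∑ j ∈ Finset.range k,
                    f ⟨xx (Fin.last m), hxl⟩ ^ j * f ⟨yy (Fin.last m), hyl⟩ ^ (k - 1 - j)) := by
              intro k
              -- the catalyst element T̂ in S₀
              set Th : S₀ := ∑ j ∈ Finset.range k,
                (⟨xx (Fin.last m), hxl⟩ : S₀) ^ j * (⟨yy (Fin.last m), hyl⟩ : S₀) ^ (k - 1 - j)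
                with hThdef
              have hTcoe : ((Th : S₀) : S) = ∑ j ∈ Finset.range k,
                  (xx (Fin.last m)) ^ j * (yy (Fin.last m)) ^ (k - 1 - j) := by
                rw [hThdef]
                push_cast
                rfl
              have htele := tele_aux' le hrefl htrans hadd hmul
                ((a : S) + ∑ i : Fin m, s i.castSucc * yy i.castSucc)
                ((b : S) + ∑ i : Fin m, s i.castSucc * xx i.castSucc)
                (s (Fin.last m)) (xx (Fin.last m)) (yy (Fin.last m)) hle k
              rw [← hTcoe] at htele
              have hmulr := hmul _ _ r htele
              -- sum reshuffles
              have hsum_y : (∑ i : Fin m, s i.castSucc * yy i.castSucc) * (Th : S) * r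
                  = ∑ i : Fin m, (s i.castSucc * r) * (yy i.castSucc * (Th : S)) := by
                rw [Finset.sum_mul, Finset.sum_mul]
                exact Finset.sum_congr rfl fun i _ => by ring
              have hsum_x : (∑ i : Fin m, s i.castSucc * xx i.castSucc) * (Th : S) * r
                  = ∑ i : Fin m, (s i.castSucc * r) * (xx i.castSucc * (Th : S)) := by
                rw [Finset.sum_mul, Finset.sum_mul]
                exact Finset.sum_congr rfl fun i _ => by ring
              have eL : (((a : S) + ∑ i : Fin m, s i.castSucc * yy i.castSucc) * (Th : S)
                    + s (Fin.last m) * yy (Fin.last m) ^ k) * r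
                  = (r * s (Fin.last m)) * yy (Fin.last m) ^ k
                    + (r * (a : S) * (Th : S)
                      + ∑ i : Fin m, (s i.castSucc * r) * (yy i.castSucc * (Th : S))) := by
                rw [← hsum_y]; ring
              have eR : (((b : S) + ∑ i : Fin m, s i.castSucc * xx i.castSucc) * (Th : S)
                    + s (Fin.last m) * xx (Fin.last m) ^ k) * r
                  = (r * s (Fin.last m)) * xx (Fin.last m) ^ k
                    + (r * (b : S) * (Th : S)
                      + ∑ i : Fin m, (s i.castSucc * r) * (xx i.castSucc * (Th : S))) := by
                rw [← hsum_x]; ring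
              have h1y : le (yy (Fin.last m) ^ k)
                  ((r * s (Fin.last m)) * yy (Fin.last m) ^ k) := by
                have := hmul _ _ (yy (Fin.last m) ^ k) h1
                rwa [one_mul] at this
              have h2x : le ((r * s (Fin.last m)) * xx (Fin.last m) ^ k)
                  (q * xx (Fin.last m) ^ k) := hmul _ _ _ h2
              have hlow : le (yy (Fin.last m) ^ k + (r * (a : S) * (Th : S)
                    + ∑ i : Fin m, (s i.castSucc * r) * (yy i.castSucc * (Th : S))))
                  ((((a : S) + ∑ i : Fin m, s i.castSucc * yy i.castSucc) * (Th : S)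
                    + s (Fin.last m) * yy (Fin.last m) ^ k) * r) := by
                rw [eL]
                exact hadd _ _ _ h1y
              have hup : le ((((b : S) + ∑ i : Fin m, s i.castSucc * xx i.castSucc) * (Th : S)
                    + s (Fin.last m) * xx (Fin.last m) ^ k) * r)
                  (q * xx (Fin.last m) ^ k + (r * (b : S) * (Th : S)
                    + ∑ i : Fin m, (s i.castSucc * r) * (xx i.castSucc * (Th : S)))) := by
                rw [eR]
                exact hadd _ _ _ h2x
              have total := htrans _ _ _ (htrans _ _ _ hlow hmulr) hup
              -- reshape into S₀ coercion form and apply IH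
              set aa : S₀ := (⟨yy (Fin.last m), hyl⟩ : S₀) ^ k
                + (⟨r, hrm⟩ : S₀) * a * Th with haadef
              set bb : S₀ := (⟨q, hqm⟩ : S₀) * (⟨xx (Fin.last m), hxl⟩ : S₀) ^ k
                + (⟨r, hrm⟩ : S₀) * b * Th with hbbdef
              have hIH := IH (fun i => s i.castSucc * r)
                (fun i => xx i.castSucc * (Th : S)) (fun i => yy i.castSucc * (Th : S))
                (fun i => Subsemiring.mul_mem _ (hx i.castSucc) Th.2)
                (fun i => Subsemiring.mul_mem _ (hy i.castSucc) Th.2)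
                (fun i => by
                  have ex : (⟨xx i.castSucc * (Th : S),
                      Subsemiring.mul_mem _ (hx i.castSucc) Th.2⟩ : S₀)
                      = ⟨xx i.castSucc, hx i.castSucc⟩ * Th := rfl
                  have ey : (⟨yy i.castSucc * (Th : S),
                      Subsemiring.mul_mem _ (hy i.castSucc) Th.2⟩ : S₀)
                      = ⟨yy i.castSucc, hy i.castSucc⟩ * Th := rfl
                  rw [ex, ey, hfmul, hfmul]
                  exact mul_le_mul_left (hfxy i.castSucc) _)
                aa bb (by
                  have ea : ((aa : S₀) : S) = yy (Fin.last m) ^ k + r * (a : S) * (Th : S) := by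
                    rw [haadef]; push_cast; ring
                  have eb : ((bb : S₀) : S)
                      = q * xx (Fin.last m) ^ k + r * (b : S) * (Th : S) := by
                    rw [hbbdef]; push_cast; ring
                  rw [ea, eb, add_assoc, add_assoc]
                  exact total)
              -- expand f aa ≤ f bb
              simp only [haadef, hbbdef, hfadd, hfmul, hfpow] at hIH
              have hfT : f Th = ∑ j ∈ Finset.range k,
                  f ⟨xx (Fin.last m), hxl⟩ ^ j * f ⟨yy (Fin.last m), hyl⟩ ^ (k - 1 - j) := by
                rw [hThdef, hfsum]
                exact Finset.sum_congr rfl fun j _ => by rw [hfmul, hfpow, hfpow]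
              rw [hfT] at hIH
              exact hIH
            exact num_aux' (f ⟨r, hrm⟩) (f ⟨q, hqm⟩) (f ⟨xx (Fin.last m), hxl⟩)
              (f ⟨yy (Fin.last m), hyl⟩) (f a) (f b) hfrne (hfxy (Fin.last m)) hnum
    exact key n s xx yy (fun i => (hR _ (hmem i)).1) (fun i => (hR _ (hmem i)).2)
      (fun i => hpairs (xx i, yy i) (hmem i)) a b hle
end

section
/- Let (S,≼) be a preordered semiring, let S₋ = {s ∈ S : ∃ n ∈ ℕ, s ≼ n} and S_b = ({s ∈ S : ∃ n ∈ ℕ, 1 ≼ n·s} ∪ {0}) ∩ S₋ (both are subsemirings of S). Let u ∈ S be a power universal element and suppose there is a ū ∈ S \ {0} with u·ū ∈ S_b. Then ū ∈ S₋, and for every monotone semiring homomorphism f : S₋ → ℝ≥0 the following are equivalent: (i) f extends to a monotone semiring homomorphism f̃ : S → ℝ≥0; (ii) f(x) ≠ 0 for every x ∈ S₋ \ {0}; (iii) f(ū) ≠ 0. Moreover, when an extension exists, it is unique. -/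
open scoped NNReal
open Filter Topology

variable {S : Type*}

/-- `S₋`: the set of elements bounded above by a natural number. -/
def Sminus [CommSemiring S] (le : S → S → Prop) : Set S :=
  {s | ∃ n : ℕ, le s (n : S)}

/-- `S_b = S₊ ∩ S₋`: the set of bounded elements, where
`S₊ = {s : ∃ n, 1 ≼ n·s} ∪ {0}`. -/
def Sbdd [CommSemiring S] (le : S → S → Prop) : Set S :=
  ({s | ∃ n : ℕ, le 1 ((n : S) * s)} ∪ {0}) ∩ Sminus le

/-- Extension lemma: if `u` is power universal and `ū ≠ 0` satisfies `u·ū ∈ S_b`,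
then `ū ∈ S₋`, and a monotone semiring homomorphism `f` on `S₋` extends to a
monotone semiring homomorphism on `S` iff `f` is nonzero on `S₋ \ {0}` iff
`f ū ≠ 0`; moreover any extension is unique. -/
theorem extension_from_Sminus [CommSemiring S] (le : S → S → Prop)
    (hpre : IsPreorderedSemiring le)
    (u : S) (hu : PowerUniversal le u)
    (ubar : S) (hubar : ubar ≠ 0) (hb : u * ubar ∈ Sbdd le) :
    ubar ∈ Sminus le ∧
      ∀ f : S → ℝ≥0, f 0 = 0 → f 1 = 1 →
        (∀ x ∈ Sminus le, ∀ y ∈ Sminus le, f (x + y) = f x + f y) →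
        (∀ x ∈ Sminus le, ∀ y ∈ Sminus le, f (x * y) = f x * f y) →
        (∀ x ∈ Sminus le, ∀ y ∈ Sminus le, le x y → f x ≤ f y) →
        (((∃ g ∈ Spectrum le, ∀ x ∈ Sminus le, g x = f x) ↔
            ∀ x ∈ Sminus le, x ≠ 0 → f x ≠ 0) ∧
          ((∀ x ∈ Sminus le, x ≠ 0 → f x ≠ 0) ↔ f ubar ≠ 0) ∧
          ∀ g₁ ∈ Spectrum le, ∀ g₂ ∈ Spectrum le,
            (∀ x ∈ Sminus le, g₁ x = f x) → (∀ x ∈ Sminus le, g₂ x = f x) → g₁ = g₂) := by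
  obtain ⟨hrefl, htrans, h01, haddm, hmulm⟩ := hpre
  obtain ⟨h1u, hpu⟩ := hu
  have hmul_left : ∀ a b c : S, le a b → le (c * a) (c * b) := fun a b c h => by
    rw [mul_comm c a, mul_comm c b]; exact hmulm a b c h
  have h1pow : ∀ k : ℕ, le 1 (u ^ k) := by
    intro k
    induction k with
    | zero => simpa using hrefl 1
    | succ n ih =>
      have h2 : le (u ^ n) (u ^ (n + 1)) := by
        have := hmulm 1 u (u ^ n) h1u
        rw [one_mul] at this
        rw [pow_succ, mul_comm]
        exact this
      exact htrans _ _ _ ih h2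
  have hpowmono : ∀ k l : ℕ, k ≤ l → le (u ^ k) (u ^ l) := by
    intro k l hkl
    obtain ⟨d, rfl⟩ := Nat.exists_eq_add_of_le hkl
    have h := hmul_left 1 (u ^ d) (u ^ k) (h1pow d)
    rw [mul_one] at h
    rw [pow_add]
    exact h
  have h0S : (0 : S) ∈ Sminus le := ⟨0, by simpa using hrefl 0⟩
  have h1S : (1 : S) ∈ Sminus le := ⟨1, by simpa using hrefl 1⟩
  have hdown : ∀ x y : S, le x y → y ∈ Sminus le → x ∈ Sminus le := by
    rintro x y hxy ⟨n, hn⟩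
    exact ⟨n, htrans _ _ _ hxy hn⟩
  have haddS : ∀ x ∈ Sminus le, ∀ y ∈ Sminus le, x + y ∈ Sminus le := by
    rintro x ⟨n, hn⟩ y ⟨m, hm⟩
    refine ⟨n + m, ?_⟩
    have hx1 : le (x + y) ((n : S) + y) := haddm x (n : S) y hn
    have hx2 : le ((n : S) + y) ((n : S) + (m : S)) := by
      have := haddm y (m : S) (n : S) hm
      rw [add_comm y, add_comm (m : S)] at this
      exact this
    push_cast
    exact htrans _ _ _ hx1 hx2
  have hmulS : ∀ x ∈ Sminus le, ∀ y ∈ Sminus le, x * y ∈ Sminus le := by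
    rintro x ⟨n, hn⟩ y ⟨m, hm⟩
    refine ⟨n * m, ?_⟩
    have hx1 : le (x * y) ((n : S) * y) := hmulm x (n : S) y hn
    have hx2 : le ((n : S) * y) ((n : S) * (m : S)) := hmul_left y (m : S) (n : S) hm
    push_cast
    exact htrans _ _ _ hx1 hx2
  have huubS : u * ubar ∈ Sminus le := hb.2
  have hubS : ubar ∈ Sminus le := by
    have h : le ubar (u * ubar) := by
      have := hmulm 1 u ubar h1u
      rw [one_mul] at this
      exact this
    exact hdown _ _ h huubS
  have hupow : ∀ k : ℕ, (u * ubar) ^ k ∈ Sminus le := by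
    intro k
    induction k with
    | zero => simpa using h1S
    | succ n ih => rw [pow_succ]; exact hmulS _ ih _ huubS
  have hubpow : ∀ k : ℕ, ubar ^ k ∈ Sminus le := by
    intro k
    induction k with
    | zero => simpa using h1S
    | succ n ih => rw [pow_succ]; exact hmulS _ ih _ hubS
  have hkey : ∀ (x : S) (k : ℕ), le x (u ^ k) → x * ubar ^ k ∈ Sminus le := by
    intro x k hx
    have h : le (x * ubar ^ k) ((u * ubar) ^ k) := by
      have := hmulm x (u ^ k) (ubar ^ k) hx
      rw [mul_pow]
      exact this
    exact hdown _ _ h (hupow k)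
  refine ⟨hubS, ?_⟩
  intro f h0 h1 hadd hmul hmono
  have fpow : ∀ m : ℕ, f (ubar ^ m) = f ubar ^ m := by
    intro m
    induction m with
    | zero => simpa using h1
    | succ n ih => rw [pow_succ, hmul _ (hubpow n) _ hubS, ih, pow_succ]
  have hshiftmem : ∀ (x : S) (k d : ℕ), x * ubar ^ k ∈ Sminus le →
      x * ubar ^ (k + d) ∈ Sminus le := by
    intro x k d hx
    have heq : x * ubar ^ (k + d) = x * ubar ^ k * ubar ^ d := by
      rw [pow_add, mul_assoc]
    rw [heq]
    exact hmulS _ hx _ (hubpow d)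
  have hshift : ∀ (x : S) (k d : ℕ), x * ubar ^ k ∈ Sminus le →
      f (x * ubar ^ (k + d)) = f (x * ubar ^ k) * f ubar ^ d := by
    intro x k d hx
    have heq : x * ubar ^ (k + d) = x * ubar ^ k * ubar ^ d := by
      rw [pow_add, mul_assoc]
    rw [heq, hmul _ hx _ (hubpow d), fpow]
  have hW : ∀ (x : S) (k l : ℕ), x * ubar ^ k ∈ Sminus le → x * ubar ^ l ∈ Sminus le →
      f (x * ubar ^ k) * f ubar ^ l = f (x * ubar ^ l) * f ubar ^ k := by
    intro x k l hk hl
    rcases le_total k l with h | h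
    · obtain ⟨d, rfl⟩ := Nat.exists_eq_add_of_le h
      rw [hshift x k d hk, pow_add]
      ring
    · obtain ⟨d, rfl⟩ := Nat.exists_eq_add_of_le h
      rw [hshift x l d hl, pow_add]
      ring
  -- part 2 : nonvanishing on `S₋ \ {0}` iff `f ū ≠ 0`
  have part2 : (∀ x ∈ Sminus le, x ≠ 0 → f x ≠ 0) ↔ f ubar ≠ 0 := by
    constructor
    · intro h
      exact h ubar hubS hubar
    · intro hfu x hxS hx0 hfx
      obtain ⟨k, -, h1x⟩ := hpu x hx0
      have hmem1 : (u * ubar) ^ k * x ∈ Sminus le := hmulS _ (hupow k) _ hxS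
      have hle : le (ubar ^ k) ((u * ubar) ^ k * x) := by
        have h2 := hmulm 1 (u ^ k * x) (ubar ^ k) h1x
        rw [one_mul] at h2
        have heq : u ^ k * x * ubar ^ k = (u * ubar) ^ k * x := by
          rw [mul_pow]; ring
        rwa [heq] at h2
      have h3 := hmono _ (hubpow k) _ hmem1 hle
      rw [fpow, hmul _ (hupow k) _ hxS, hfx, mul_zero] at h3
      have h4 : f ubar ^ k = 0 := le_antisymm h3 zero_le
      rcases k with _ | k
      · simp at h4
      · exact hfu (pow_eq_zero_iff (Nat.succ_ne_zero k) |>.mp h4)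
  -- uniqueness
  have part3 : ∀ g₁ ∈ Spectrum le, ∀ g₂ ∈ Spectrum le,
      (∀ x ∈ Sminus le, g₁ x = f x) → (∀ x ∈ Sminus le, g₂ x = f x) → g₁ = g₂ := by
    rintro g₁ ⟨hg10, hg11, hg1add, hg1mul, hg1mono⟩ g₂ ⟨hg20, hg21, hg2add, hg2mul, hg2mono⟩
      he1 he2
    have g1pow : ∀ (a : S) (m : ℕ), g₁ (a ^ m) = g₁ a ^ m := by
      intro a m
      induction m with
      | zero => simpa using hg11
      | succ n ih => rw [pow_succ, hg1mul, ih, pow_succ]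
    have g2pow : ∀ (a : S) (m : ℕ), g₂ (a ^ m) = g₂ a ^ m := by
      intro a m
      induction m with
      | zero => simpa using hg21
      | succ n ih => rw [pow_succ, hg2mul, ih, pow_succ]
    have hfu : f ubar ≠ 0 := by
      intro hfu
      obtain ⟨k, -, h1x⟩ := hpu ubar hubar
      have h2 := hg1mono _ _ h1x
      rw [hg11, hg1mul, he1 ubar hubS, hfu, mul_zero] at h2
      exact one_ne_zero (le_antisymm h2 zero_le)
    funext x
    by_cases hx0 : x = 0
    · rw [hx0, hg10, hg20]
    obtain ⟨k, hk, -⟩ := hpu x hx0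
    have hmemx : x * ubar ^ k ∈ Sminus le := hkey x k hk
    have e1 : g₁ x * f ubar ^ k = f (x * ubar ^ k) := by
      rw [← he1 _ hmemx, hg1mul, g1pow, he1 ubar hubS]
    have e2 : g₂ x * f ubar ^ k = f (x * ubar ^ k) := by
      rw [← he2 _ hmemx, hg2mul, g2pow, he2 ubar hubS]
    exact mul_right_cancel₀ (pow_ne_zero _ hfu) (e1.trans e2.symm)
  -- part 1
  have part1 : (∃ g ∈ Spectrum le, ∀ x ∈ Sminus le, g x = f x) ↔
      ∀ x ∈ Sminus le, x ≠ 0 → f x ≠ 0 := by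
    constructor
    · rintro ⟨g, ⟨hg0, hg1, hgadd, hgmul, hgmono⟩, hgf⟩ x hxS hx0 hfx
      obtain ⟨k, -, h1x⟩ := hpu x hx0
      have h2 := hgmono _ _ h1x
      rw [hg1, hgmul, hgf x hxS, hfx, mul_zero] at h2
      exact one_ne_zero (le_antisymm h2 zero_le)
    · intro hnz
      have hfu : f ubar ≠ 0 := hnz ubar hubS hubar
      have hKex : ∀ x : S, ∃ k : ℕ, x * ubar ^ k ∈ Sminus le := by
        intro x
        by_cases hx0 : x = 0
        · exact ⟨0, by rw [hx0, zero_mul]; exact h0S⟩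
        obtain ⟨k, hk, -⟩ := hpu x hx0
        exact ⟨k, hkey x k hk⟩
      choose K hK using hKex
      set g : S → ℝ≥0 := fun x => f (x * ubar ^ K x) / f ubar ^ K x with hgdef
      have hgchar : ∀ (x : S) (k : ℕ), x * ubar ^ k ∈ Sminus le →
          g x = f (x * ubar ^ k) / f ubar ^ k := by
        intro x k hk
        rw [hgdef]
        rw [div_eq_div_iff (pow_ne_zero _ hfu) (pow_ne_zero _ hfu)]
        exact hW x (K x) k (hK x) hk
      have hmax : ∀ (x : S) (k : ℕ), K x ≤ k → x * ubar ^ k ∈ Sminus le := by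
        intro x k hk
        obtain ⟨d, rfl⟩ := Nat.exists_eq_add_of_le hk
        exact hshiftmem x _ d (hK x)
      refine ⟨g, ⟨?_, ?_, ?_, ?_, ?_⟩, ?_⟩
      · have := hgchar 0 0 (by simpa using h0S)
        simpa [h0] using this
      · have := hgchar 1 0 (by simpa using h1S)
        simpa [h1] using this
      · intro a b
        set k := max (K a) (K b) with hkd
        have ha : a * ubar ^ k ∈ Sminus le := hmax a k (le_max_left _ _)
        have hb' : b * ubar ^ k ∈ Sminus le := hmax b k (le_max_right _ _)
        have hab : (a + b) * ubar ^ k ∈ Sminus le := by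
          rw [add_mul]; exact haddS _ ha _ hb'
        rw [hgchar (a + b) k hab, hgchar a k ha, hgchar b k hb', add_mul,
          hadd _ ha _ hb', add_div]
      · intro a b
        have hab : a * b * ubar ^ (K a + K b) ∈ Sminus le := by
          have heq : a * b * ubar ^ (K a + K b) = a * ubar ^ K a * (b * ubar ^ K b) := by
            rw [pow_add]; ring
          rw [heq]
          exact hmulS _ (hK a) _ (hK b)
        have heq : a * b * ubar ^ (K a + K b) = a * ubar ^ K a * (b * ubar ^ K b) := by
          rw [pow_add]; ring
        rw [hgchar (a * b) _ hab, hgchar a _ (hK a), hgchar b _ (hK b), heq,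
          hmul _ (hK a) _ (hK b), pow_add, div_mul_div_comm]
      · intro a b hab
        set k := max (K a) (K b) with hkd
        have ha : a * ubar ^ k ∈ Sminus le := hmax a k (le_max_left _ _)
        have hb' : b * ubar ^ k ∈ Sminus le := hmax b k (le_max_right _ _)
        have hle : le (a * ubar ^ k) (b * ubar ^ k) := hmulm a b _ hab
        have h2 := hmono _ ha _ hb' hle
        rw [hgchar a k ha, hgchar b k hb']
        gcongr
      · intro x hx
        have := hgchar x 0 (by simpa using hx)
        simpa using this
  exact ⟨part1, part2, part3⟩
end
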